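/- arXiv:2605.15825 — 6 statements merged into one kernel-verified Lean document; each statement's English description precedes it below -/
import Mathlib

section
/- Let μ, υ > -1, 0 < ρ ≤ 1, and let r, s be natural numbers. Then ∫₀¹ ϰ^{μ,υ,ρ}(t) 𝒫_r^{μ,υ,ρ}(t) 𝒫_s^{μ,υ,ρ}(t) dt = β̂_r^{μ,υ} δ_{rs}, where β̂_r^{μ,υ} = Γ(r+μ+1)Γ(r+υ+1) / ( r! (2r+μ+υ+1) Γ(r+μ+υ+1) ). In particular the fractional backward Jacobi functions form an orthogonal system in the weighted L² space with weight ϰ^{μ,υ,ρ}. -/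
open Real MeasureTheory Finset

/-- The fractional backward Jacobi function of degree `r` with parameters `μ, υ, ρ`. -/
noncomputable def backJacobi (μ υ ρ : ℝ) (r : ℕ) (t : ℝ) : ℝ :=
  (Real.Gamma ((r : ℝ) + μ + 1) / ((Nat.factorial r : ℝ) * Real.Gamma ((r : ℝ) + μ + υ + 1))) *
    ∑ k ∈ Finset.range (r + 1),
      (Nat.choose r k : ℝ) * (-1 : ℝ) ^ k *
        (Real.Gamma ((r : ℝ) + (k : ℝ) + μ + υ + 1) / Real.Gamma ((k : ℝ) + μ + 1)) *
        (1 - t) ^ (ρ * (k : ℝ))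

/-- The backward Jacobi weight ϰ^{μ,υ,ρ} on (0,1). -/
noncomputable def backWeight (μ υ ρ t : ℝ) : ℝ :=
  ρ * (1 - t) ^ (ρ * (μ + 1) - 1) * (1 - (1 - t) ^ ρ) ^ υ

/-- The normalization constant β̂_r^{μ,υ}. -/
noncomputable def betaHat (μ υ : ℝ) (r : ℕ) : ℝ :=
  Real.Gamma ((r : ℝ) + μ + 1) * Real.Gamma ((r : ℝ) + υ + 1) /
    ((Nat.factorial r : ℝ) * (2 * (r : ℝ) + μ + υ + 1) * Real.Gamma ((r : ℝ) + μ + υ + 1))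

/-!
Substituting `x = (1 - t) ^ ρ` turns `ϰ^{μ,υ,ρ}(t) dt` into the Jacobi weight
`x ^ μ (1 - x) ^ υ dx` on `(0, 1)` and `𝒫_r^{μ,υ,ρ}(t)` into the Jacobi polynomial
`P_r^{(μ,υ)}(1 - 2x)`, so the theorem is the orthogonality of Jacobi polynomials. Against this
weight `x ^ n` integrates to `B(μ + n + 1, υ + 1)`, and the integral of `x ^ j P_s^{(μ,υ)}(1 - 2x)`
becomes an alternating binomial sum `∑ₖ (-1)ᵏ C(s, k) f(k)`, an `s`-th finite difference. For
`j < s`, `f` is a product of two Pochhammer symbols of total degree `s - 1`, so the sum vanishes.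
For `j = s`, `f(k) = Q(k) / (k + x)` with `Q` of degree `s` and `x = s + μ + υ + 1`; only
`Q(-x) / (k + x)` contributes, and the `s`-th difference of `1 / (k + x)` is `± s! / (x)_{s+1}`,
which gives the norm.
-/

open Polynomial
open scoped Nat

theorem Real.Gamma_ne_zero_of_neg_one_lt {x : ℝ} (hx : -1 < x) (hx0 : x ≠ 0) : Gamma x ≠ 0 :=
  Gamma_ne_zero fun m hm => by
    rcases m with _ | m
    · exact hx0 (by simpa using hm)
    · rw [hm] at hx; push_cast at hx; linarith

theorem add_nat_ne_zero_of_neg_one_lt {x : ℝ} (hx : -1 < x) (hx0 : x ≠ 0) (k : ℕ) : x + k ≠ 0 := by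
  rcases Nat.eq_zero_or_pos k with rfl | hk
  · simpa using hx0
  · have : (1 : ℝ) ≤ k := by exact_mod_cast hk
    linarith

theorem Real.Gamma_add_nat_eq_mul_ascPochhammer {x : ℝ} {n : ℕ} (hx : ∀ k < n, x + k ≠ 0) :
    Gamma (x + n) = Gamma x * (ascPochhammer ℝ n).eval x := by
  induction n with
  | zero => simp
  | succ n ih =>
    rw [Nat.cast_succ, ← add_assoc, Gamma_add_one (hx n n.lt_succ_self),
      ih fun k hk => hx k (hk.trans n.lt_succ_self), ascPochhammer_succ_eval]
    ring

theorem ascPochhammer_eval_ne_zero {R : Type*} [CommRing R] [IsDomain R] {n : ℕ} {x : R}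
    (hx : ∀ k < n, x + k ≠ 0) : (ascPochhammer R n).eval x ≠ 0 := by
  rw [Ne, ascPochhammer_eval_eq_zero_iff]
  rintro ⟨k, hk, hkx⟩
  exact hx k hk (by rw [hkx, add_neg_cancel])

theorem alternating_sum_eq_fwdDiff_iter {R : Type*} [CommRing R] (f : R → R) (n : ℕ) :
    ∑ k ∈ range (n + 1), (-1 : R) ^ k * n.choose k * f k = (-1) ^ n * (fwdDiff 1)^[n] f 0 := by
  rw [fwdDiff_iter_eq_sum_shift, mul_sum]
  refine sum_congr rfl fun k hk => ?_
  have hk : k ≤ n := Nat.lt_succ_iff.mp (mem_range.mp hk)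
  rw [zsmul_eq_mul, nsmul_one, zero_add]
  push_cast
  rw [← mul_assoc, ← mul_assoc, ← pow_add, show n + (n - k) = k + 2 * (n - k) by omega, pow_add,
    pow_mul, neg_one_sq, one_pow, mul_one]

theorem Polynomial.alternating_sum_eval_eq_zero {R : Type*} [CommRing R] {P : R[X]} {n : ℕ}
    (hP : P.degree < n) : ∑ k ∈ range (n + 1), (-1 : R) ^ k * n.choose k * P.eval (k : R) = 0 := by
  nontriviality R
  rcases eq_or_ne P 0 with rfl | hP0
  · simp
  refine (alternating_sum_eq_fwdDiff_iter (eval · P) n).trans ?_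
  rw [P.fwdDiff_iter_eq_zero_of_degree_lt ((natDegree_lt_iff_degree_lt hP0).mpr hP)]
  simp

theorem fwdDiff_iter_inv {K : Type*} [Field K] (n : ℕ) (x : K) (hx : ∀ k ≤ n, x + k ≠ 0) :
    (fwdDiff 1)^[n] (fun y : K => y⁻¹) x = (-1) ^ n * n ! / (ascPochhammer K (n + 1)).eval x := by
  induction n generalizing x with
  | zero => simp
  | succ n ih =>
    have hx1 : ∀ k ≤ n, x + 1 + k ≠ 0 := fun k hk => by
      simpa [add_assoc, add_comm (1 : K)] using hx (k + 1) (by omega)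
    have hP := ascPochhammer_eval_ne_zero (n := n + 1) fun k hk => hx k (by omega)
    have hP₁ := ascPochhammer_eval_ne_zero (n := n + 1) fun k hk => hx1 k (by omega)
    have hx0 : x ≠ 0 := by simpa using hx 0 (by omega)
    have hleft : (ascPochhammer K (n + 2)).eval x = x * (ascPochhammer K (n + 1)).eval (x + 1) := by
      rw [ascPochhammer_succ_left, eval_mul, eval_X, eval_comp, eval_add, eval_X, eval_one]
    have hright : (ascPochhammer K (n + 2)).eval x
        = (ascPochhammer K (n + 1)).eval x * (x + (n + 1)) := by
      rw [ascPochhammer_succ_eval]; push_cast; ring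
    rw [Function.iterate_succ_apply', fwdDiff, ih x fun k hk => hx k (by omega), ih (x + 1) hx1,
      hleft, div_sub_div _ _ hP₁ hP]
    rw [hleft] at hright
    field_simp
    push_cast [Nat.factorial_succ, pow_succ]
    linear_combination (-(-1 : K) ^ n * n !) * hright

theorem alternating_sum_inv {K : Type*} [Field K] (n : ℕ) (x : K) (hx : ∀ k ≤ n, x + k ≠ 0) :
    ∑ k ∈ range (n + 1), (-1 : K) ^ k * n.choose k * (k + x)⁻¹
      = n ! / (ascPochhammer K (n + 1)).eval x := by
  refine (alternating_sum_eq_fwdDiff_iter (fun y => (y + x)⁻¹) n).trans ?_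
  rw [fwdDiff_iter_comp_add (h := 1) (fun y => y⁻¹) x n 0, zero_add, fwdDiff_iter_inv n x hx,
    ← mul_div_assoc, ← mul_assoc, ← pow_add, Even.neg_one_pow ⟨n, rfl⟩, one_mul]

theorem Polynomial.alternating_sum_eval_div {K : Type*} [Field K] {P : K[X]} {n : ℕ}
    (hP : P.degree ≤ n) (x : K) (hx : ∀ k ≤ n, x + k ≠ 0) :
    ∑ k ∈ range (n + 1), (-1 : K) ^ k * n.choose k * (P.eval (k : K) / (k + x))
      = P.eval (-x) * (n ! / (ascPochhammer K (n + 1)).eval x) := by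
  set q := P /ₘ (X - C (-x))
  have hdecomp : ∀ y, P.eval y = (y + x) * q.eval y + P.eval (-x) := fun y => by
    conv_lhs => rw [← modByMonic_add_div P (X - C (-x)), modByMonic_X_sub_C_eq_C_eval]
    rw [eval_add, eval_C, eval_mul, eval_sub, eval_X, eval_C, sub_neg_eq_add, add_comm]
  have hq : q.degree < n := by
    rcases eq_or_ne P 0 with rfl | hP0
    · simp [q]
    · exact (degree_divByMonic_lt P _ hP0 (by rw [degree_X_sub_C]; exact zero_lt_one)).trans_le hP
  calc ∑ k ∈ range (n + 1), (-1 : K) ^ k * n.choose k * (P.eval (k : K) / (k + x))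
      = ∑ k ∈ range (n + 1), (-1 : K) ^ k * n.choose k * q.eval (k : K)
          + P.eval (-x) * ∑ k ∈ range (n + 1), (-1 : K) ^ k * n.choose k * (k + x)⁻¹ := by
        rw [mul_sum, ← sum_add_distrib]
        refine sum_congr rfl fun k hk => ?_
        have hkx : (k : K) + x ≠ 0 := by
          rw [add_comm]; exact hx k (Nat.lt_succ_iff.mp (mem_range.mp hk))
        rw [hdecomp, add_div, mul_div_cancel_left₀ _ hkx]
        ring
    _ = P.eval (-x) * (n ! / (ascPochhammer K (n + 1)).eval x) := by
        rw [alternating_sum_eval_eq_zero hq, alternating_sum_inv n x hx, zero_add]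

theorem betaIntegrand_ofReal {u v x : ℝ} (hx : x ∈ Set.Ioo (0 : ℝ) 1) :
    (x : ℂ) ^ (((u + 1 : ℝ) : ℂ) - 1) * (1 - (x : ℂ)) ^ (((v + 1 : ℝ) : ℂ) - 1)
      = ((x ^ u * (1 - x) ^ v : ℝ) : ℂ) := by
  rw [Complex.ofReal_add, Complex.ofReal_add, Complex.ofReal_one, add_sub_cancel_right,
    add_sub_cancel_right, Complex.ofReal_mul, Complex.ofReal_cpow hx.1.le,
    Complex.ofReal_cpow (sub_nonneg.mpr hx.2.le), Complex.ofReal_sub, Complex.ofReal_one]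

theorem integrableOn_betaIntegrand {u v : ℝ} (hu : -1 < u) (hv : -1 < v) :
    IntegrableOn
      (fun x : ℝ => (x : ℂ) ^ (((u + 1 : ℝ) : ℂ) - 1) * (1 - (x : ℂ)) ^ (((v + 1 : ℝ) : ℂ) - 1))
      (Set.Ioo 0 1) :=
  (intervalIntegrable_iff_integrableOn_Ioo_of_le zero_le_one).mp <|
    Complex.betaIntegral_convergent (by simp; linarith) (by simp; linarith)

theorem integrableOn_rpow_mul_one_sub_rpow {u v : ℝ} (hu : -1 < u) (hv : -1 < v) :
    IntegrableOn (fun x : ℝ => x ^ u * (1 - x) ^ v) (Set.Ioo 0 1) := by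
  refine IntegrableOn.congr_fun (integrableOn_betaIntegrand hu hv).re (fun x hx => ?_)
    measurableSet_Ioo
  simp only [betaIntegrand_ofReal hx, RCLike.re_to_complex, Complex.ofReal_re]

theorem integral_rpow_mul_one_sub_rpow {u v : ℝ} (hu : -1 < u) (hv : -1 < v) :
    ∫ x in Set.Ioo 0 1, x ^ u * (1 - x) ^ v = ProbabilityTheory.beta (u + 1) (v + 1) := by
  rw [ProbabilityTheory.beta_eq_betaIntegralReal _ _ (by linarith) (by linarith),
    Complex.betaIntegral, intervalIntegral.integral_of_le zero_le_one,
    integral_Ioc_eq_integral_Ioo, ← RCLike.re_to_complex,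
    ← integral_re (integrableOn_betaIntegrand hu hv)]
  refine setIntegral_congr_fun measurableSet_Ioo fun x hx => ?_
  simp only [betaIntegrand_ofReal hx, RCLike.re_to_complex, Complex.ofReal_re]

theorem strictAntiOn_one_sub_rpow {ρ : ℝ} (hρ : 0 < ρ) :
    StrictAntiOn (fun t : ℝ => (1 - t) ^ ρ) (Set.Icc 0 1) :=
  fun _ _ _ hb h => rpow_lt_rpow (sub_nonneg.mpr hb.2) (by linarith) hρ

theorem image_one_sub_rpow_Ioo {ρ : ℝ} (hρ : 0 < ρ) :
    (fun t : ℝ => (1 - t) ^ ρ) '' Set.Ioo 0 1 = Set.Ioo 0 1 := by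
  have hcont : Continuous fun t : ℝ => (1 - t) ^ ρ :=
    (continuous_rpow_const hρ.le).comp (continuous_const.sub continuous_id)
  rw [hcont.continuousOn.image_Ioo_of_strictAntiOn zero_le_one (strictAntiOn_one_sub_rpow hρ)]
  simp [zero_rpow hρ.ne']

theorem integral_Ioo_comp_one_sub_rpow {ρ : ℝ} (hρ : 0 < ρ) (g : ℝ → ℝ) :
    ∫ t in Set.Ioo 0 1, ρ * (1 - t) ^ (ρ - 1) * g ((1 - t) ^ ρ) = ∫ x in Set.Ioo 0 1, g x := by
  have hderiv : ∀ t ∈ Set.Ioo (0 : ℝ) 1,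
      HasDerivWithinAt (fun t : ℝ => (1 - t) ^ ρ) (-(ρ * (1 - t) ^ (ρ - 1))) (Set.Ioo 0 1) t :=
    fun t ht => (((hasDerivAt_id t).const_sub 1).rpow_const (p := ρ)
      (Or.inl (sub_pos.mpr ht.2).ne')).hasDerivWithinAt.congr_deriv (by simp)
  have hinj := (strictAntiOn_one_sub_rpow hρ).injOn.mono Set.Ioo_subset_Icc_self
  conv_rhs => rw [← image_one_sub_rpow_Ioo hρ]
  rw [integral_image_eq_integral_abs_deriv_smul measurableSet_Ioo hderiv hinj]
  refine setIntegral_congr_fun measurableSet_Ioo fun t ht => ?_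
  rw [smul_eq_mul, abs_neg, abs_of_pos (by have := sub_pos.mpr ht.2; positivity)]

theorem integral_backWeight_mul_comp (μ υ : ℝ) {ρ : ℝ} (hρ : 0 < ρ) (g : ℝ → ℝ) :
    ∫ t in (0 : ℝ)..1, backWeight μ υ ρ t * g ((1 - t) ^ ρ)
      = ∫ x in Set.Ioo 0 1, x ^ μ * (1 - x) ^ υ * g x := by
  rw [intervalIntegral.integral_of_le zero_le_one, integral_Ioc_eq_integral_Ioo,
    ← integral_Ioo_comp_one_sub_rpow hρ fun x => x ^ μ * (1 - x) ^ υ * g x]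
  refine setIntegral_congr_fun measurableSet_Ioo fun t ht => ?_
  have h : 0 < 1 - t := sub_pos.mpr ht.2
  rw [backWeight, ← rpow_mul h.le, show ρ * (μ + 1) - 1 = (ρ - 1) + ρ * μ by ring, rpow_add h]
  ring

noncomputable def jacobiNormalizer (μ υ : ℝ) (r : ℕ) : ℝ :=
  Gamma ((r : ℝ) + μ + 1) / ((r ! : ℝ) * Gamma ((r : ℝ) + μ + υ + 1))

noncomputable def jacobiCoeff (μ υ : ℝ) (r k : ℕ) : ℝ :=
  (r.choose k : ℝ) * (-1 : ℝ) ^ k *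
    (Gamma ((r : ℝ) + (k : ℝ) + μ + υ + 1) / Gamma ((k : ℝ) + μ + 1))

/-- The Jacobi polynomial `P_r^{(μ,υ)}(1 - 2x)`. -/
noncomputable def shiftedJacobi (μ υ : ℝ) (r : ℕ) : ℝ[X] :=
  jacobiNormalizer μ υ r • ∑ k ∈ range (r + 1), jacobiCoeff μ υ r k • X ^ k

theorem backJacobi_eq_eval_shiftedJacobi (μ υ ρ : ℝ) (r : ℕ) {t : ℝ} (ht : t ≤ 1) :
    backJacobi μ υ ρ r t = (shiftedJacobi μ υ r).eval ((1 - t) ^ ρ) := by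
  simp only [backJacobi, shiftedJacobi, jacobiNormalizer, jacobiCoeff, eval_smul, eval_finsetSum,
    eval_pow, eval_X, smul_eq_mul]
  congr 1
  refine sum_congr rfl fun k _ => ?_
  rw [← rpow_natCast ((1 - t) ^ ρ) k, ← rpow_mul (sub_nonneg.mpr ht)]

/-- `P ↦ ∫₀¹ x ^ μ (1 - x) ^ υ P(x) dx`, defined through its values on monomials. -/
noncomputable def jacobiFunctional (μ υ : ℝ) : ℝ[X] →ₗ[ℝ] ℝ :=
  lsum fun n => ProbabilityTheory.beta (μ + n + 1) (υ + 1) • LinearMap.id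

theorem jacobiFunctional_X_pow (μ υ : ℝ) (n : ℕ) :
    jacobiFunctional μ υ (X ^ n) = ProbabilityTheory.beta (μ + n + 1) (υ + 1) := by
  rw [jacobiFunctional, lsum_apply, X_pow_eq_monomial, sum_monomial_index] <;> simp

theorem integral_mul_eval_eq_jacobiFunctional {μ υ : ℝ} (hμ : -1 < μ) (hυ : -1 < υ) (P : ℝ[X]) :
    ∫ x in Set.Ioo 0 1, x ^ μ * (1 - x) ^ υ * P.eval x = jacobiFunctional μ υ P := by
  have hmoment : ∀ n : ℕ, Set.EqOn (fun x : ℝ => x ^ (μ + n) * (1 - x) ^ υ)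
      (fun x => x ^ μ * (1 - x) ^ υ * x ^ n) (Set.Ioo 0 1) := fun n x hx => by
    simp only [rpow_add hx.1, rpow_natCast]
    ring
  have hμn : ∀ n : ℕ, -1 < μ + n := fun n => by linarith [n.cast_nonneg (α := ℝ)]
  simp_rw [eval_eq_sum, Polynomial.sum_def, mul_sum, mul_left_comm _ (P.coeff _)]
  rw [integral_finsetSum _ fun n _ => ((integrableOn_rpow_mul_one_sub_rpow (hμn n) hυ).congr_fun
      (hmoment n) measurableSet_Ioo).const_mul _,
    jacobiFunctional, lsum_apply, Polynomial.sum_def]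
  refine sum_congr rfl fun n _ => ?_
  rw [integral_const_mul, ← setIntegral_congr_fun measurableSet_Ioo (hmoment n),
    integral_rpow_mul_one_sub_rpow (hμn n) hυ, LinearMap.smul_apply, LinearMap.id_apply,
    smul_eq_mul, mul_comm]

theorem jacobiFunctional_X_pow_mul_shiftedJacobi (μ υ : ℝ) (j s : ℕ) :
    jacobiFunctional μ υ (X ^ j * shiftedJacobi μ υ s) = jacobiNormalizer μ υ s *
      ∑ k ∈ range (s + 1),
        jacobiCoeff μ υ s k * ProbabilityTheory.beta (μ + ↑(j + k) + 1) (υ + 1) := by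
  simp only [shiftedJacobi, mul_smul_comm, mul_sum, ← pow_add, map_smul, map_sum,
    jacobiFunctional_X_pow, smul_eq_mul, Nat.cast_add]

theorem sum_jacobiCoeff_mul_beta_of_lt {μ υ : ℝ} (hμ : -1 < μ) (hυ : -1 < υ) {j s : ℕ}
    (hjs : j < s) :
    ∑ k ∈ range (s + 1), jacobiCoeff μ υ s k * ProbabilityTheory.beta (μ + ↑(j + k) + 1) (υ + 1)
      = 0 := by
  obtain ⟨m, rfl⟩ := Nat.exists_eq_add_of_lt hjs
  set Q : ℝ[X] := (ascPochhammer ℝ j).comp (X + C (μ + 1)) *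
    (ascPochhammer ℝ m).comp (X + C (j + μ + υ + 2))
  have hterm : ∀ k ∈ range (j + m + 1 + 1),
      jacobiCoeff μ υ (j + m + 1) k * ProbabilityTheory.beta (μ + ↑(j + k) + 1) (υ + 1)
        = Gamma (υ + 1) * ((-1) ^ k * (j + m + 1).choose k * Q.eval (k : ℝ)) := fun k _ => by
    have ha : 0 < (k : ℝ) + μ + 1 := by linarith [k.cast_nonneg (α := ℝ)]
    have hb : 0 < (k : ℝ) + j + μ + υ + 2 := by
      linarith [k.cast_nonneg (α := ℝ), j.cast_nonneg (α := ℝ)]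
    have hΓa : Gamma (μ + ↑(j + k) + 1)
        = Gamma (k + μ + 1) * (ascPochhammer ℝ j).eval (k + μ + 1) := by
      rw [← Gamma_add_nat_eq_mul_ascPochhammer fun i _ =>
        (add_pos_of_pos_of_nonneg ha i.cast_nonneg).ne']
      push_cast; ring_nf
    have hΓb : Gamma (↑(j + m + 1) + k + μ + υ + 1)
        = Gamma (k + j + μ + υ + 2) * (ascPochhammer ℝ m).eval (k + j + μ + υ + 2) := by
      rw [← Gamma_add_nat_eq_mul_ascPochhammer fun i _ =>
        (add_pos_of_pos_of_nonneg hb i.cast_nonneg).ne']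
      push_cast; ring_nf
    have hΓc : Gamma (μ + ↑(j + k) + 1 + (υ + 1)) = Gamma (k + j + μ + υ + 2) := by
      push_cast; ring_nf
    simp only [jacobiCoeff, ProbabilityTheory.beta, hΓa, hΓb, hΓc, Q, eval_mul, eval_comp,
      eval_add, eval_X, eval_C]
    field_simp [(Gamma_pos_of_pos ha).ne', (Gamma_pos_of_pos hb).ne']
    ring_nf
  have hQ : Q.degree < ↑(j + m + 1) := by
    refine degree_le_natDegree.trans_lt (WithBot.coe_lt_coe.mpr (natDegree_mul_le.trans_lt ?_))
    simp only [natDegree_comp, ascPochhammer_natDegree, natDegree_X_add_C, mul_one, Nat.cast_id]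
    omega
  rw [sum_congr rfl hterm, ← mul_sum, alternating_sum_eval_eq_zero hQ, mul_zero]

theorem sum_jacobiCoeff_mul_beta_self {μ υ : ℝ} (hμ : -1 < μ) (hυ : -1 < υ) {s : ℕ}
    (hs : (s : ℝ) + μ + υ + 1 ≠ 0) :
    ∑ k ∈ range (s + 1), jacobiCoeff μ υ s k * ProbabilityTheory.beta (μ + ↑(s + k) + 1) (υ + 1)
      = (-1) ^ s * s ! * Gamma (s + υ + 1) / (ascPochhammer ℝ (s + 1)).eval (s + μ + υ + 1) := by
  set x : ℝ := s + μ + υ + 1 with hx_def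
  have hx : ∀ k : ℕ, x + k ≠ 0 :=
    add_nat_ne_zero_of_neg_one_lt (by linarith [s.cast_nonneg (α := ℝ)]) hs
  set Q : ℝ[X] := (ascPochhammer ℝ s).comp (X + C (μ + 1))
  have hterm : ∀ k ∈ range (s + 1),
      jacobiCoeff μ υ s k * ProbabilityTheory.beta (μ + ↑(s + k) + 1) (υ + 1)
        = Gamma (υ + 1) * ((-1) ^ k * s.choose k * (Q.eval (k : ℝ) / (k + x))) := fun k _ => by
    have hkx : (k : ℝ) + x ≠ 0 := by rw [add_comm]; exact hx k
    have ha : 0 < (k : ℝ) + μ + 1 := by linarith [k.cast_nonneg (α := ℝ)]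
    have hΓx : Gamma (k + x) ≠ 0 := Gamma_ne_zero_of_neg_one_lt
      (by linarith [k.cast_nonneg (α := ℝ), s.cast_nonneg (α := ℝ)]) hkx
    have hΓa : Gamma (μ + ↑(s + k) + 1)
        = Gamma (k + μ + 1) * (ascPochhammer ℝ s).eval (k + μ + 1) := by
      rw [← Gamma_add_nat_eq_mul_ascPochhammer fun i _ =>
        (add_pos_of_pos_of_nonneg ha i.cast_nonneg).ne']
      push_cast; ring_nf
    have hΓb : Gamma (μ + ↑(s + k) + 1 + (υ + 1)) = (k + x) * Gamma (k + x) := by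
      rw [← Gamma_add_one hkx, hx_def]; push_cast; ring_nf
    have hΓc : Gamma (↑s + ↑k + μ + υ + 1) = Gamma (k + x) := by rw [hx_def]; ring_nf
    simp only [jacobiCoeff, ProbabilityTheory.beta, hΓa, hΓb, hΓc, Q, eval_comp, eval_add,
      eval_X, eval_C]
    field_simp [(Gamma_pos_of_pos ha).ne']
    ring_nf
  have hQ : Q.degree ≤ s := by
    refine degree_le_natDegree.trans (WithBot.coe_le_coe.mpr ?_)
    simp only [Q, natDegree_comp, ascPochhammer_natDegree, natDegree_X_add_C, mul_one, le_rfl]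
  have hQx : Q.eval (-x) = (-1) ^ s * (ascPochhammer ℝ s).eval (υ + 1) := by
    simp only [Q, eval_comp, eval_add, eval_X, eval_C]
    rw [show -x + (μ + 1) = -(s + υ) by rw [hx_def]; ring, ascPochhammer_eval_neg_eq_descPochhammer,
      descPochhammer_eval_eq_ascPochhammer]
    ring_nf
  have hΓυ : Gamma (υ + 1) * (ascPochhammer ℝ s).eval (υ + 1) = Gamma (s + υ + 1) := by
    rw [← Gamma_add_nat_eq_mul_ascPochhammer fun i _ => by linarith [i.cast_nonneg (α := ℝ)]]
    ring_nf
  rw [sum_congr rfl hterm, ← mul_sum, alternating_sum_eval_div hQ x fun k _ => hx k, hQx, ← hΓυ]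
  ring

theorem jacobiFunctional_shiftedJacobi_mul (μ υ : ℝ) (r s : ℕ) :
    jacobiFunctional μ υ (shiftedJacobi μ υ r * shiftedJacobi μ υ s) = jacobiNormalizer μ υ r *
      ∑ j ∈ range (r + 1),
        jacobiCoeff μ υ r j * jacobiFunctional μ υ (X ^ j * shiftedJacobi μ υ s) := by
  rw [shiftedJacobi.eq_1 μ υ r]
  simp only [smul_mul_assoc, sum_mul, map_smul, map_sum, smul_eq_mul]

theorem jacobiFunctional_shiftedJacobi_mul_of_lt {μ υ : ℝ} (hμ : -1 < μ) (hυ : -1 < υ) {r s : ℕ}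
    (hrs : r < s) : jacobiFunctional μ υ (shiftedJacobi μ υ r * shiftedJacobi μ υ s) = 0 := by
  rw [jacobiFunctional_shiftedJacobi_mul]
  refine mul_eq_zero_of_right _ (sum_eq_zero fun j hj => ?_)
  rw [jacobiFunctional_X_pow_mul_shiftedJacobi,
    sum_jacobiCoeff_mul_beta_of_lt hμ hυ ((Nat.lt_succ_iff.mp (mem_range.mp hj)).trans_lt hrs),
    mul_zero, mul_zero]

theorem jacobiFunctional_shiftedJacobi_mul_self {μ υ : ℝ} (hμ : -1 < μ) (hυ : -1 < υ) (s : ℕ) :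
    jacobiFunctional μ υ (shiftedJacobi μ υ s * shiftedJacobi μ υ s) = betaHat μ υ s := by
  -- `s + μ + υ + 1 = 0` forces `s = 0`; then `Gamma 0 = 0` makes both sides junk zeros.
  by_cases hs : (s : ℝ) + μ + υ + 1 = 0
  · have hΓ : Gamma ((s : ℝ) + μ + υ + 1) = 0 := by rw [hs, Gamma_zero]
    simp [shiftedJacobi, jacobiNormalizer, betaHat, hΓ]
  rw [jacobiFunctional_shiftedJacobi_mul, sum_range_succ, sum_eq_zero fun j hj => by
      rw [jacobiFunctional_X_pow_mul_shiftedJacobi, sum_jacobiCoeff_mul_beta_of_lt hμ hυ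
        (mem_range.mp hj), mul_zero, mul_zero],
    zero_add, jacobiFunctional_X_pow_mul_shiftedJacobi, sum_jacobiCoeff_mul_beta_self hμ hυ hs]
  have hc : -1 < (s : ℝ) + μ + υ + 1 := by linarith [s.cast_nonneg (α := ℝ)]
  have hs' : ∀ k : ℕ, (s : ℝ) + μ + υ + 1 + k ≠ 0 := add_nat_ne_zero_of_neg_one_lt hc hs
  have h2s : 2 * (s : ℝ) + μ + υ + 1 ≠ 0 := by convert hs' s using 1; ring
  have hP := ascPochhammer_eval_ne_zero (n := s + 1) fun k _ => hs' k
  have hΓP : Gamma ((s : ℝ) + μ + υ + 1) * (ascPochhammer ℝ (s + 1)).eval ((s : ℝ) + μ + υ + 1)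
      = (2 * s + μ + υ + 1) * Gamma (2 * s + μ + υ + 1) := by
    rw [← Gamma_add_nat_eq_mul_ascPochhammer fun k _ => hs' k, ← Gamma_add_one h2s]
    push_cast; ring_nf
  have hΓa : Gamma ((s : ℝ) + μ + 1) ≠ 0 :=
    (Gamma_pos_of_pos (by linarith [s.cast_nonneg (α := ℝ)])).ne'
  have hΓc : Gamma ((s : ℝ) + μ + υ + 1) ≠ 0 := Gamma_ne_zero_of_neg_one_lt hc hs
  have hΓ2c : Gamma (2 * (s : ℝ) + μ + υ + 1) ≠ 0 :=
    Gamma_ne_zero_of_neg_one_lt (by linarith [s.cast_nonneg (α := ℝ)]) h2s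
  have hsq : ((-1 : ℝ) ^ s) ^ 2 = 1 := by rw [← pow_mul, mul_comm, pow_mul, neg_one_sq, one_pow]
  simp only [jacobiNormalizer, jacobiCoeff, betaHat, Nat.choose_self, Nat.cast_one, one_mul,
    show (s : ℝ) + s + μ + υ + 1 = 2 * s + μ + υ + 1 by ring]
  field_simp
  rw [mul_comm (s : ℝ) 2, eq_div_iff h2s]
  linear_combination
    Gamma ((s : ℝ) + υ + 1) * ((2 * s + μ + υ + 1) * Gamma (2 * s + μ + υ + 1) * hsq - hΓP)

theorem jacobiFunctional_shiftedJacobi_mul_shiftedJacobi {μ υ : ℝ} (hμ : -1 < μ) (hυ : -1 < υ)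
    (r s : ℕ) : jacobiFunctional μ υ (shiftedJacobi μ υ r * shiftedJacobi μ υ s)
      = if r = s then betaHat μ υ r else 0 := by
  rcases lt_trichotomy r s with hrs | rfl | hrs
  · rw [if_neg hrs.ne, jacobiFunctional_shiftedJacobi_mul_of_lt hμ hυ hrs]
  · rw [if_pos rfl, jacobiFunctional_shiftedJacobi_mul_self hμ hυ]
  · rw [if_neg hrs.ne', mul_comm, jacobiFunctional_shiftedJacobi_mul_of_lt hμ hυ hrs]

theorem backJacobi_orthogonality_general
    (μ υ ρ : ℝ) (hμ : -1 < μ) (hυ : -1 < υ) (hρ0 : 0 < ρ) (r s : ℕ) :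
    ∫ t in (0:ℝ)..1, backWeight μ υ ρ t * backJacobi μ υ ρ r t * backJacobi μ υ ρ s t
      = if r = s then betaHat μ υ r else 0 := by
  have hpoly : ∀ t ∈ Set.uIcc (0 : ℝ) 1,
      backWeight μ υ ρ t * backJacobi μ υ ρ r t * backJacobi μ υ ρ s t
        = backWeight μ υ ρ t * (shiftedJacobi μ υ r * shiftedJacobi μ υ s).eval ((1 - t) ^ ρ) :=
    fun t ht => by
      rw [Set.uIcc_of_le zero_le_one] at ht
      rw [backJacobi_eq_eval_shiftedJacobi μ υ ρ r ht.2,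
        backJacobi_eq_eval_shiftedJacobi μ υ ρ s ht.2, eval_mul, mul_assoc]
  rw [intervalIntegral.integral_congr hpoly,
    integral_backWeight_mul_comp μ υ hρ0 (eval · (shiftedJacobi μ υ r * shiftedJacobi μ υ s)),
    integral_mul_eval_eq_jacobiFunctional hμ hυ,
    jacobiFunctional_shiftedJacobi_mul_shiftedJacobi hμ hυ]

/-- Orthogonality of the fractional backward Jacobi functions with respect to the
weight ϰ^{μ,υ,ρ}. -/
theorem backJacobi_orthogonality
    (μ υ ρ : ℝ) (hμ : -1 < μ) (hυ : -1 < υ) (hρ0 : 0 < ρ) (hρ1 : ρ ≤ 1) (r s : ℕ) :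
    ∫ t in (0:ℝ)..1, backWeight μ υ ρ t * backJacobi μ υ ρ r t * backJacobi μ υ ρ s t
      = if r = s then betaHat μ υ r else 0 :=
  backJacobi_orthogonality_general μ υ ρ hμ hυ hρ0 r s
end

section
/- Let μ, υ > -1, 0 < ρ ≤ 1 and let r ≥ 1 be an integer. Then for every t ∈ (0,1), ((1-t)^{1-ρ}/ρ) · d/dt 𝒫_r^{μ,υ,ρ}(t) = (r+μ+υ+1) 𝒫_{r-1}^{μ+1,υ+1,ρ}(t); that is, the backward transformed derivative of the degree-r fractional backward Jacobi function with parameters (μ,υ) equals (r+μ+υ+1) times the degree-(r-1) function with parameters (μ+1,υ+1). -/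
/-!
Writing `𝒫_r^{μ,υ,ρ}(t) = ∑ₖ cₖ (1-t)^{ρk}`, the operator `D_ρ` sends `(1-t)^{ρk}`
to `-k (1-t)^{ρ(k-1)}`, so it kills the constant term and lowers the degree by one.
The claim then reduces to the coefficient identity
`-(j+1) c_{j+1}^{μ,υ,r} = (r+μ+υ+1) c_j^{μ+1,υ+1,r-1}`, which follows from
`(j+1) C(r, j+1) = r C(r-1, j)` and `Γ(x+1) = x Γ(x)` at `x = r+μ+υ+1`.
-/

open Real MeasureTheory Finset

noncomputable def backJacobiCoeff (μ υ : ℝ) (r k : ℕ) : ℝ :=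
  Gamma (r + μ + 1) / (r.factorial * Gamma (r + μ + υ + 1)) *
    (r.choose k * (-1) ^ k * (Gamma (r + k + μ + υ + 1) / Gamma (k + μ + 1)))

lemma backJacobi_eq_sum (μ υ ρ : ℝ) (r : ℕ) (t : ℝ) :
    backJacobi μ υ ρ r t =
      ∑ k ∈ range (r + 1), backJacobiCoeff μ υ r k * (1 - t) ^ (ρ * k) := by
  simp only [backJacobi, backJacobiCoeff, mul_sum, mul_assoc]

-- At `ρ = 0` this holds through the junk value `(x / 0)⁻¹ = 0`, the function being constant.
lemma hasDerivAt_one_sub_rpow_mul {ρ t : ℝ} (ht : t < 1) (b : ℝ) :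
    HasDerivAt (fun s ↦ (1 - s) ^ (ρ * b))
      (((1 - t) ^ (1 - ρ) / ρ)⁻¹ * -(b * (1 - t) ^ (ρ * (b - 1)))) t := by
  have hpos : 0 < 1 - t := sub_pos.mpr ht
  have hchain := ((hasDerivAt_id t).const_sub 1).rpow_const (p := ρ * b) (.inl hpos.ne')
  refine hchain.congr_deriv ?_
  rw [id, show ρ * b - 1 = ρ * (b - 1) - (1 - ρ) by ring, rpow_sub hpos, inv_div]
  ring

lemma hasDerivAt_backJacobi {ρ t : ℝ} (μ υ : ℝ) (r : ℕ) (ht : t < 1) :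
    HasDerivAt (backJacobi μ υ ρ r)
      (((1 - t) ^ (1 - ρ) / ρ)⁻¹ *
        ∑ k ∈ range (r + 1), backJacobiCoeff μ υ r k * -(k * (1 - t) ^ (ρ * (k - 1)))) t := by
  rw [funext (backJacobi_eq_sum μ υ ρ r), mul_sum]
  refine (HasDerivAt.fun_sum fun (k : ℕ) _ ↦
    (hasDerivAt_one_sub_rpow_mul ht k).const_mul (backJacobiCoeff μ υ r k)).congr_deriv
      (sum_congr rfl fun k _ ↦ mul_left_comm _ _ _)

lemma backJacobiCoeff_succ_mul {μ υ : ℝ} (hμ : -1 < μ) (hυ : -1 < υ) (m j : ℕ) :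
    backJacobiCoeff μ υ (m + 1) (j + 1) * ((j : ℝ) + 1)
      = -(((m : ℝ) + μ + υ + 2) * backJacobiCoeff (μ + 1) (υ + 1) m j) := by
  have hX : 0 < (m : ℝ) + μ + υ + 2 := by linarith [m.cast_nonneg (α := ℝ)]
  have hchoose : ((m + 1).choose (j + 1) : ℝ) * (j + 1) = (m + 1) * m.choose j := by
    exact_mod_cast (Nat.add_one_mul_choose_eq m j).symm
  have hGamma : Gamma ((m : ℝ) + (μ + 1) + (υ + 1) + 1)
      = ((m : ℝ) + μ + υ + 2) * Gamma ((m : ℝ) + 1 + μ + υ + 1) := by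
    rw [show (m : ℝ) + (μ + 1) + (υ + 1) + 1 = (m + μ + υ + 2) + 1 by ring,
      Gamma_add_one hX.ne']
    ring_nf
  have hΓ₁ : Gamma ((m : ℝ) + 1 + μ + υ + 1) ≠ 0 := (Gamma_pos_of_pos (by linarith)).ne'
  have hΓ₂ : Gamma ((j : ℝ) + 1 + μ + 1) ≠ 0 :=
    (Gamma_pos_of_pos (by linarith [j.cast_nonneg (α := ℝ)])).ne'
  simp only [backJacobiCoeff, Nat.factorial_succ, hGamma]
  push_cast
  rw [show (m : ℝ) + (μ + 1) + 1 = m + 1 + μ + 1 by ring,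
    show (m : ℝ) + j + (μ + 1) + (υ + 1) + 1 = m + 1 + (j + 1) + μ + υ + 1 by ring,
    show (j : ℝ) + (μ + 1) + 1 = j + 1 + μ + 1 by ring, pow_succ]
  field_simp
  linear_combination
    -Gamma ((m : ℝ) + 1 + μ + 1) * Gamma ((m : ℝ) + 1 + (j + 1) + μ + υ + 1) * hchoose

theorem backJacobi_deriv_general
    (μ υ ρ : ℝ) (hμ : -1 < μ) (hυ : -1 < υ) (hρ0 : 0 < ρ)
    (r : ℕ) (hr : 1 ≤ r) :
    ∀ t ∈ Set.Ioo (0:ℝ) 1,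
      (1 - t) ^ (1 - ρ) / ρ * deriv (backJacobi μ υ ρ r) t
        = ((r : ℝ) + μ + υ + 1) * backJacobi (μ + 1) (υ + 1) ρ (r - 1) t := by
  rintro t ⟨-, ht⟩
  obtain ⟨m, rfl⟩ : ∃ m, r = m + 1 := ⟨r - 1, by omega⟩
  have hweight : (1 - t) ^ (1 - ρ) / ρ ≠ 0 := by
    have := sub_pos.mpr ht
    positivity
  rw [(hasDerivAt_backJacobi μ υ (m + 1) ht).deriv, mul_inv_cancel_left₀ hweight,
    Nat.add_sub_cancel, backJacobi_eq_sum, sum_range_succ', mul_sum]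
  simp only [Nat.cast_zero, zero_mul, neg_zero, mul_zero, add_zero]
  refine sum_congr rfl fun j _ ↦ ?_
  push_cast
  rw [show ρ * ((j : ℝ) + 1 - 1) = ρ * j by ring]
  linear_combination (-(1 - t) ^ (ρ * j)) * backJacobiCoeff_succ_mul hμ hυ m j

/-- The backward transformed derivative of a backward Jacobi function:
D_ρ 𝒫_r^{μ,υ,ρ} = (r+μ+υ+1) 𝒫_{r-1}^{μ+1,υ+1,ρ}. -/
theorem backJacobi_deriv
    (μ υ ρ : ℝ) (hμ : -1 < μ) (hυ : -1 < υ) (hρ0 : 0 < ρ) (hρ1 : ρ ≤ 1)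
    (r : ℕ) (hr : 1 ≤ r) :
    ∀ t ∈ Set.Ioo (0:ℝ) 1,
      (1 - t) ^ (1 - ρ) / ρ * deriv (backJacobi μ υ ρ r) t
        = ((r : ℝ) + μ + υ + 1) * backJacobi (μ + 1) (υ + 1) ρ (r - 1) t :=
  backJacobi_deriv_general μ υ ρ hμ hυ hρ0 r hr
end

section
/- Let 0 < θ < 1, let K be continuous on the triangle Δ_R = {(t,ϱ) : 0 ≤ t ≤ ϱ ≤ 1}, and let u, φ be nonnegative continuous functions on [0,1] satisfying u(t) ≤ φ(t) + ∫_t^1 (ϱ-t)^{-θ} K(t,ϱ) u(ϱ) dϱ for all t ∈ [0,1]. Then there exists a constant C > 0, depending only on θ and the maximum of |K| over Δ_R (and independent of u and t), such that u(t) ≤ Φ(t) · E_{1-θ}( C Γ(1-θ) (1-t)^{1-θ} ) for all t ∈ [0,1], where Φ(t) = max_{t ≤ s ≤ 1} φ(s) and E_σ(z) = Σ_{n=0}^{∞} z^n / Γ(σ n + 1) is the Mittag–Leffler function. -/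
/-!
Fix `t`, put `P = Φ(t)` and let `A ≥ max K`; then `u(s) ≤ P + A ∫_s^1 (ϱ-s)^{-θ} u(ϱ) dϱ` on
`[t, 1]`. On a window `[a, b]` of length at most `h`, where `A h^{1-θ} ≤ (1-θ)/2`, the part of the
integral over the window is at most half the supremum of `u` there, so this supremum is at most
`2 (P + A G / (1-θ))` once `u ≤ G` on `[b, 1]`. Stepping backwards from `1` through `⌈1/h⌉`
windows gives `u ≤ B P` on `[t, 1]`, with `B` depending only on `θ` and `A`. Feeding this bound
into the inequality once more gives `u(t) ≤ Φ(t) (1 + A B (1-t)^{1-θ} / (1-θ))`, which is `Φ(t)`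
times the first two terms of the series for `E_{1-θ}(A B Γ(1-θ) (1-t)^{1-θ})`.
-/

open Real MeasureTheory

/-- The Mittag–Leffler function E_σ(z) = Σ_{n=0}^∞ z^n / Γ(σn+1). -/
noncomputable def mittagLeffler (σ z : ℝ) : ℝ :=
  ∑' n : ℕ, z ^ n / Real.Gamma (σ * (n : ℝ) + 1)

open Set Filter Topology

section MittagLeffler

open scoped Nat

lemma factorial_floor_le_Gamma_add_one {x : ℝ} (hx : 1 ≤ x) : (⌊x⌋₊ ! : ℝ) ≤ Gamma (x + 1) := by
  have hfloor : 1 ≤ ⌊x⌋₊ := Nat.one_le_floor_iff _ |>.mpr hx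
  rw [← Gamma_nat_eq_factorial]
  refine Gamma_strictMonoOn_Ici.monotoneOn ?_ ?_ (by gcongr; exact Nat.floor_le (by linarith))
  · simp only [mem_Ici]; norm_cast; omega
  · simp only [mem_Ici]; linarith

lemma summable_mittagLeffler {σ : ℝ} (hσ : 0 < σ) (z : ℝ) :
    Summable fun n : ℕ => z ^ n / Gamma (σ * n + 1) := by
  obtain ⟨q, hq⟩ : ∃ q : ℕ, 1 ≤ σ * q :=
    ⟨⌈σ⁻¹⌉₊, by rw [← inv_le_iff_one_le_mul₀' hσ]; exact Nat.le_ceil _⟩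
  set R : ℝ := (2 * max 1 |z|) ^ q
  have hfloor : Tendsto (fun n : ℕ => ⌊σ * n⌋₊) atTop atTop :=
    tendsto_nat_floor_atTop.comp (tendsto_natCast_atTop_atTop.const_mul_atTop hσ)
  have hsmall : ∀ᶠ n : ℕ in atTop, R * (R ^ ⌊σ * n⌋₊ / ⌊σ * n⌋₊ !) ≤ 1 := by
    have := (FloorSemiring.tendsto_pow_div_factorial_atTop R).const_mul R
    rw [mul_zero] at this
    exact hfloor.eventually (this.eventually (ge_mem_nhds one_pos))
  have hlarge : ∀ᶠ n : ℕ in atTop, 1 ≤ σ * n :=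
    (tendsto_natCast_atTop_atTop.const_mul_atTop hσ).eventually_ge_atTop 1
  refine Summable.of_norm_bounded_eventually_nat summable_geometric_two ?_
  filter_upwards [hsmall, hlarge] with n hsmall hlarge
  set k := ⌊σ * n⌋₊
  have hn : n ≤ q * (k + 1) := by
    have hk : σ * n < k + 1 := Nat.lt_floor_add_one _
    have : (n : ℝ) < q * (k + 1) := by nlinarith
    exact_mod_cast this.le
  have hΓ : 0 < Gamma (σ * n + 1) := Gamma_pos_of_pos (by positivity)
  have hpow : (2 * |z|) ^ n ≤ Gamma (σ * n + 1) :=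
    calc (2 * |z|) ^ n ≤ (2 * max 1 |z|) ^ n := by gcongr; exact le_max_right _ _
      _ ≤ (2 * max 1 |z|) ^ (q * (k + 1)) :=
        pow_le_pow_right₀ (by linarith [le_max_left 1 |z|]) hn
      _ = R * R ^ k := by rw [pow_mul, pow_succ']
      _ ≤ k ! := by
        rwa [mul_div_assoc', div_le_one (by positivity)] at hsmall
      _ ≤ Gamma (σ * n + 1) := factorial_floor_le_Gamma_add_one hlarge
  rw [norm_div, norm_pow, Real.norm_eq_abs, Real.norm_of_nonneg hΓ.le, div_le_iff₀ hΓ]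
  calc |z| ^ n = (1 / 2) ^ n * (2 * |z|) ^ n := by rw [← mul_pow]; ring
    _ ≤ (1 / 2) ^ n * Gamma (σ * n + 1) := by gcongr

lemma one_add_div_Gamma_le_mittagLeffler {σ z : ℝ} (hσ : 0 < σ) (hz : 0 ≤ z) :
    1 + z / Gamma (σ + 1) ≤ mittagLeffler σ z := by
  have h := (summable_mittagLeffler hσ z).sum_le_tsum (Finset.range 2)
    fun n _ => div_nonneg (pow_nonneg hz n) (Gamma_pos_of_pos (by positivity)).le
  simpa [mittagLeffler, Finset.sum_range_succ] using h

end MittagLeffler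

section SingularKernel

variable {θ : ℝ}

lemma intervalIntegrable_rpow_neg_sub (hθ1 : θ < 1) (s a b : ℝ) :
    IntervalIntegrable (fun ϱ => (ϱ - s) ^ (-θ)) volume a b := by
  simpa using (intervalIntegral.intervalIntegrable_rpow' (a := a - s) (b := b - s)
    (by linarith : (-1 : ℝ) < -θ)).comp_sub_right s

lemma intervalIntegrable_rpow_neg_sub_mul (hθ1 : θ < 1) (s : ℝ) {a b : ℝ} {u : ℝ → ℝ}
    (hu : ContinuousOn u (uIcc a b)) :
    IntervalIntegrable (fun ϱ => (ϱ - s) ^ (-θ) * u ϱ) volume a b :=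
  (intervalIntegrable_rpow_neg_sub hθ1 s a b).mul_continuousOn hu

lemma integral_rpow_neg_sub (hθ1 : θ < 1) (s a b : ℝ) :
    ∫ ϱ in a..b, (ϱ - s) ^ (-θ) = ((b - s) ^ (1 - θ) - (a - s) ^ (1 - θ)) / (1 - θ) := by
  rw [intervalIntegral.integral_comp_sub_right (· ^ (-θ)),
    integral_rpow (Or.inl (by linarith : (-1 : ℝ) < -θ)), neg_add_eq_sub]

lemma integral_rpow_neg_sub_mul_le (hθ1 : θ < 1) {s a b G : ℝ} {u : ℝ → ℝ}
    (hsa : s ≤ a) (hab : a ≤ b) (hu : ContinuousOn u (Icc a b))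
    (hG : ∀ ϱ ∈ Icc a b, u ϱ ≤ G) :
    ∫ ϱ in a..b, (ϱ - s) ^ (-θ) * u ϱ ≤
      G * (((b - s) ^ (1 - θ) - (a - s) ^ (1 - θ)) / (1 - θ)) := by
  rw [← integral_rpow_neg_sub hθ1, ← intervalIntegral.integral_const_mul]
  refine intervalIntegral.integral_mono_on hab
    (intervalIntegrable_rpow_neg_sub_mul hθ1 s (by rwa [uIcc_of_le hab]))
    ((intervalIntegrable_rpow_neg_sub hθ1 s a b).const_mul G) fun ϱ hϱ => ?_
  rw [mul_comm G]
  exact mul_le_mul_of_nonneg_left (hG ϱ hϱ) (rpow_nonneg (by linarith [hϱ.1]) _)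

lemma integral_rpow_neg_sub_mul_le_of_split (hθ1 : θ < 1) {s b V G : ℝ} {u : ℝ → ℝ}
    (hs : 0 ≤ s) (hsb : s ≤ b) (hb : b ≤ 1) (hG : 0 ≤ G) (hu : ContinuousOn u (Icc s 1))
    (hV : ∀ ϱ ∈ Icc s b, u ϱ ≤ V) (hGu : ∀ ϱ ∈ Icc b 1, u ϱ ≤ G) :
    ∫ ϱ in s..1, (ϱ - s) ^ (-θ) * u ϱ ≤ V * (b - s) ^ (1 - θ) / (1 - θ) + G / (1 - θ) := by
  have hδ : 0 < 1 - θ := by linarith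
  have hnear_cont : ContinuousOn u (Icc s b) := hu.mono (Icc_subset_Icc_right hb)
  have hfar_cont : ContinuousOn u (Icc b 1) := hu.mono (Icc_subset_Icc_left hsb)
  rw [← intervalIntegral.integral_add_adjacent_intervals
    (intervalIntegrable_rpow_neg_sub_mul hθ1 s (by rwa [uIcc_of_le hsb]))
    (intervalIntegrable_rpow_neg_sub_mul hθ1 s (by rwa [uIcc_of_le hb]))]
  have hnear := integral_rpow_neg_sub_mul_le hθ1 le_rfl hsb hnear_cont hV
  have hfar := integral_rpow_neg_sub_mul_le hθ1 hsb hb hfar_cont hGu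
  have hpow_le : (1 - s) ^ (1 - θ) ≤ 1 := rpow_le_one (by linarith) (by linarith) hδ.le
  have hpow_nonneg : 0 ≤ (b - s) ^ (1 - θ) := rpow_nonneg (by linarith) _
  rw [sub_self, zero_rpow hδ.ne', sub_zero, ← mul_div_assoc] at hnear
  have hfar_le : G * (((1 - s) ^ (1 - θ) - (b - s) ^ (1 - θ)) / (1 - θ)) ≤ G / (1 - θ) := by
    rw [mul_div_assoc', div_le_div_iff_of_pos_right hδ]
    nlinarith
  linarith

lemma integral_rpow_neg_sub_mul_mul_le (hθ1 : θ < 1) {s b A : ℝ} {k u : ℝ → ℝ}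
    (hsb : s ≤ b) (hk : ContinuousOn k (Icc s b)) (hu : ContinuousOn u (Icc s b))
    (hkA : ∀ ϱ ∈ Icc s b, k ϱ ≤ A) (hu0 : ∀ ϱ ∈ Icc s b, 0 ≤ u ϱ) :
    ∫ ϱ in s..b, (ϱ - s) ^ (-θ) * k ϱ * u ϱ ≤ A * ∫ ϱ in s..b, (ϱ - s) ^ (-θ) * u ϱ := by
  simp_rw [mul_assoc, ← intervalIntegral.integral_const_mul]
  refine intervalIntegral.integral_mono_on hsb
    (intervalIntegrable_rpow_neg_sub_mul hθ1 s (by rw [uIcc_of_le hsb]; exact hk.mul hu))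
    ((intervalIntegrable_rpow_neg_sub_mul hθ1 s (by rwa [uIcc_of_le hsb])).const_mul A)
    fun ϱ hϱ => ?_
  rw [mul_left_comm A]
  exact mul_le_mul_of_nonneg_left (mul_le_mul_of_nonneg_right (hkA ϱ hϱ) (hu0 ϱ hϱ))
    (rpow_nonneg (sub_nonneg.2 hϱ.1) _)

end SingularKernel

section APriori

variable {θ A P : ℝ} {u : ℝ → ℝ}

lemma le_two_mul_of_window (hθ1 : θ < 1) (hA : 0 ≤ A) {a b G : ℝ} (ha : 0 ≤ a) (hab : a ≤ b)
    (hb : b ≤ 1) (hwin : A * (b - a) ^ (1 - θ) ≤ (1 - θ) / 2) (hG : 0 ≤ G)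
    (hu : ContinuousOn u (Icc a 1)) (hu0 : ∀ s ∈ Icc a b, 0 ≤ u s)
    (hGu : ∀ s ∈ Icc b 1, u s ≤ G)
    (hPu : ∀ s ∈ Icc a b, u s ≤ P + A * ∫ ϱ in s..1, (ϱ - s) ^ (-θ) * u ϱ) :
    ∀ s ∈ Icc a b, u s ≤ 2 * (P + A * G / (1 - θ)) := by
  have hδ : 0 < 1 - θ := by linarith
  have hbdd : BddAbove (u '' Icc a b) :=
    (isCompact_Icc.image_of_continuousOn (hu.mono (Icc_subset_Icc_right hb))).bddAbove
  set V := sSup (u '' Icc a b)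
  have huV : ∀ s ∈ Icc a b, u s ≤ V := fun s hs => le_csSup hbdd (mem_image_of_mem u hs)
  have hV0 : 0 ≤ V := (hu0 a ⟨le_rfl, hab⟩).trans (huV a ⟨le_rfl, hab⟩)
  have hhalf : ∀ s ∈ Icc a b, u s ≤ P + V / 2 + A * G / (1 - θ) := by
    intro s hs
    have hint := integral_rpow_neg_sub_mul_le_of_split hθ1 (ha.trans hs.1) hs.2 hb hG
      (hu.mono (Icc_subset_Icc_left hs.1)) (fun ϱ hϱ => huV ϱ ⟨hs.1.trans hϱ.1, hϱ.2⟩) hGu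
    have hsmall : A * (b - s) ^ (1 - θ) ≤ (1 - θ) / 2 :=
      le_trans (by gcongr <;> linarith [hs.1, hs.2]) hwin
    calc u s ≤ P + A * ∫ ϱ in s..1, (ϱ - s) ^ (-θ) * u ϱ := hPu s hs
      _ ≤ P + A * (V * (b - s) ^ (1 - θ) / (1 - θ) + G / (1 - θ)) := by gcongr
      _ = P + V * (A * (b - s) ^ (1 - θ)) / (1 - θ) + A * G / (1 - θ) := by ring
      _ ≤ P + V * ((1 - θ) / 2) / (1 - θ) + A * G / (1 - θ) := by gcongr
      _ = P + V / 2 + A * G / (1 - θ) := by field_simp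
  have hV : V ≤ P + V / 2 + A * G / (1 - θ) :=
    csSup_le ((nonempty_Icc.2 hab).image u) (by rintro _ ⟨s, hs, rfl⟩; exact hhalf s hs)
  intro s hs
  linarith [huV s hs]

lemma le_pow_mul_of_steps (hθ1 : θ < 1) (hA : 0 ≤ A) (hP : 0 ≤ P) {t h : ℝ} (ht : 0 ≤ t)
    (hh : 0 ≤ h) (hstep : A * h ^ (1 - θ) ≤ (1 - θ) / 2) (hu : ContinuousOn u (Icc t 1))
    (hu0 : ∀ s ∈ Icc t 1, 0 ≤ u s)
    (hPu : ∀ s ∈ Icc t 1, u s ≤ P + A * ∫ ϱ in s..1, (ϱ - s) ^ (-θ) * u ϱ) (j : ℕ) :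
    ∀ s ∈ Icc t 1, 1 - j * h ≤ s → u s ≤ (2 * (1 + A / (1 - θ))) ^ j * P := by
  set c := 2 * (1 + A / (1 - θ))
  have hc : 1 ≤ c := by
    have : 0 ≤ A / (1 - θ) := by positivity
    linarith
  induction j with
  | zero =>
    intro s hs hs1
    obtain rfl : s = 1 := le_antisymm hs.2 (by simpa using hs1)
    simpa using hPu 1 hs
  | succ j ih =>
    intro s hs hsj
    by_cases hj : 1 - j * h ≤ s
    · calc u s ≤ c ^ j * P := ih s hs hj
        _ ≤ c ^ (j + 1) * P := mul_le_mul_of_nonneg_right (pow_le_pow_right₀ hc j.le_succ) hP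
    · push Not at hj
      have hjh : 0 ≤ (j : ℝ) * h := by positivity
      have hcP : P ≤ c ^ j * P := le_mul_of_one_le_left hP (one_le_pow₀ hc)
      have hwin : A * (1 - j * h - s) ^ (1 - θ) ≤ (1 - θ) / 2 := by
        refine le_trans ?_ hstep
        gcongr
        push_cast at hsj
        linarith
      have hwindow := le_two_mul_of_window hθ1 hA (ht.trans hs.1) hj.le (by linarith) hwin
        (hP.trans hcP) (hu.mono (Icc_subset_Icc_left hs.1))
        (fun ϱ hϱ => hu0 ϱ ⟨hs.1.trans hϱ.1, hϱ.2.trans (by linarith)⟩)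
        (fun ϱ hϱ => ih ϱ ⟨by linarith [hϱ.1, hs.1], hϱ.2⟩ hϱ.1)
        (fun ϱ hϱ => hPu ϱ ⟨hs.1.trans hϱ.1, hϱ.2.trans (by linarith)⟩) s ⟨le_rfl, hj.le⟩
      calc u s ≤ 2 * (P + A * (c ^ j * P) / (1 - θ)) := hwindow
        _ ≤ 2 * (c ^ j * P + A * (c ^ j * P) / (1 - θ)) := by gcongr
        _ = c ^ (j + 1) * P := by ring

lemma exists_le_mul_of_le_add_integral (hθ1 : θ < 1) (hA : 0 ≤ A) :
    ∃ B > 0, ∀ t, 0 ≤ t → ∀ P, 0 ≤ P → ∀ u : ℝ → ℝ, ContinuousOn u (Icc t 1) →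
      (∀ s ∈ Icc t 1, 0 ≤ u s) →
      (∀ s ∈ Icc t 1, u s ≤ P + A * ∫ ϱ in s..1, (ϱ - s) ^ (-θ) * u ϱ) →
      ∀ s ∈ Icc t 1, u s ≤ B * P := by
  have hδ : 0 < 1 - θ := by linarith
  set h := ((1 - θ) / (2 * (A + 1))) ^ (1 - θ)⁻¹
  have hh : 0 < h := by positivity
  have hstep : A * h ^ (1 - θ) ≤ (1 - θ) / 2 := by
    rw [rpow_inv_rpow (by positivity) hδ.ne', mul_div_assoc', div_le_div_iff₀ (by positivity)
      two_pos]
    nlinarith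
  refine ⟨(2 * (1 + A / (1 - θ))) ^ ⌈1 / h⌉₊, by positivity,
    fun t ht P hP u hu hu0 hPu s hs => ?_⟩
  have hN : 1 ≤ ⌈1 / h⌉₊ * h := by
    rw [← div_le_iff₀ hh]
    exact Nat.le_ceil _
  exact le_pow_mul_of_steps hθ1 hA hP ht hh.le hstep hu hu0 hPu _ s hs (by linarith [hs.1])

end APriori

lemma isCompact_triangle : IsCompact {p : ℝ × ℝ | 0 ≤ p.1 ∧ p.1 ≤ p.2 ∧ p.2 ≤ 1} := by
  refine (isCompact_Icc (a := ((0 : ℝ), (0 : ℝ))) (b := (1, 1))).of_isClosed_subset ?_ ?_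
  · exact (isClosed_le continuous_const continuous_fst).inter
      ((isClosed_le continuous_fst continuous_snd).inter
        (isClosed_le continuous_snd continuous_const))
  · rintro ⟨x, y⟩ ⟨hx, hxy, hy⟩
    exact ⟨⟨hx, hx.trans hxy⟩, ⟨hxy.trans hy, hy⟩⟩

lemma exists_pos_bound_of_continuousOn_triangle {K : ℝ → ℝ → ℝ}
    (hK : ContinuousOn (fun p : ℝ × ℝ => K p.1 p.2) {p : ℝ × ℝ | 0 ≤ p.1 ∧ p.1 ≤ p.2 ∧ p.2 ≤ 1}) :
    ∃ A > 0, ∀ s ϱ, 0 ≤ s → s ≤ ϱ → ϱ ≤ 1 → K s ϱ ≤ A := by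
  obtain ⟨M, hM⟩ := isCompact_triangle.exists_bound_of_continuousOn hK
  exact ⟨max M 1, by positivity, fun s ϱ hs hsϱ hϱ =>
    (le_abs_self _).trans ((hM (s, ϱ) ⟨hs, hsϱ, hϱ⟩).trans (le_max_left M 1))⟩

theorem backward_gronwall_general
    (θ : ℝ) (hθ1 : θ < 1)
    (K : ℝ → ℝ → ℝ)
    (hK : ContinuousOn (fun p : ℝ × ℝ => K p.1 p.2)
      {p : ℝ × ℝ | 0 ≤ p.1 ∧ p.1 ≤ p.2 ∧ p.2 ≤ 1}) :
    ∃ C > 0, ∀ u φ : ℝ → ℝ,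
      ContinuousOn u (Set.Icc 0 1) → ContinuousOn φ (Set.Icc 0 1) →
      (∀ t ∈ Set.Icc (0:ℝ) 1, 0 ≤ u t) →
      (∀ t ∈ Set.Icc (0:ℝ) 1, 0 ≤ φ t) →
      (∀ t ∈ Set.Icc (0:ℝ) 1,
        u t ≤ φ t + ∫ ϱ in t..1, (ϱ - t) ^ (-θ) * K t ϱ * u ϱ) →
      ∀ t ∈ Set.Icc (0:ℝ) 1,
        u t ≤ sSup (φ '' Set.Icc t 1) *
          mittagLeffler (1 - θ) (C * Real.Gamma (1 - θ) * (1 - t) ^ (1 - θ)) := by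
  have hδ : 0 < 1 - θ := by linarith
  obtain ⟨A, hA, hKA⟩ := exists_pos_bound_of_continuousOn_triangle hK
  obtain ⟨B, hB, hbound⟩ := exists_le_mul_of_le_add_integral hθ1 hA.le
  refine ⟨A * B, by positivity, fun u φ hu hφ hu0 hφ0 hineq t ht => ?_⟩
  have hsub : Icc t 1 ⊆ Icc 0 1 := Icc_subset_Icc_left ht.1
  set Φ := sSup (φ '' Icc t 1)
  have hφΦ : ∀ s ∈ Icc t 1, φ s ≤ Φ := fun s hs =>
    le_csSup (isCompact_Icc.image_of_continuousOn (hφ.mono hsub)).bddAbove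
      (mem_image_of_mem φ hs)
  have hΦ0 : 0 ≤ Φ := (hφ0 1 ⟨zero_le_one, le_rfl⟩).trans (hφΦ 1 ⟨ht.2, le_rfl⟩)
  have hineqΦ : ∀ s ∈ Icc t 1, u s ≤ Φ + A * ∫ ϱ in s..1, (ϱ - s) ^ (-θ) * u ϱ := by
    intro s hs
    have hs0 : 0 ≤ s := ht.1.trans hs.1
    have hKs := integral_rpow_neg_sub_mul_mul_le (k := K s) hθ1 hs.2
      (hK.comp (continuousOn_const.prodMk continuousOn_id) fun ϱ hϱ => ⟨hs0, hϱ.1, hϱ.2⟩)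
      (hu.mono (Icc_subset_Icc_left hs0)) (fun ϱ hϱ => hKA s ϱ hs0 hϱ.1 hϱ.2)
      (fun ϱ hϱ => hu0 ϱ ⟨hs0.trans hϱ.1, hϱ.2⟩)
    linarith [hineq s (hsub hs), hφΦ s hs]
  have huB := hbound t ht.1 Φ hΦ0 u (hu.mono hsub) (fun s hs => hu0 s (hsub hs)) hineqΦ
  have hint := integral_rpow_neg_sub_mul_le hθ1 le_rfl ht.2 (hu.mono hsub) huB
  rw [sub_self, zero_rpow hδ.ne', sub_zero] at hint
  calc u t ≤ Φ + A * (B * Φ * ((1 - t) ^ (1 - θ) / (1 - θ))) := by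
        linarith [hineqΦ t ⟨le_rfl, ht.2⟩, mul_le_mul_of_nonneg_left hint (by positivity : 0 ≤ A)]
    _ = Φ * (1 + A * B * Gamma (1 - θ) * (1 - t) ^ (1 - θ) / Gamma (1 - θ + 1)) := by
        rw [Gamma_add_one hδ.ne']
        field_simp
    _ ≤ Φ * mittagLeffler (1 - θ) (A * B * Gamma (1 - θ) * (1 - t) ^ (1 - θ)) := by
        gcongr
        exact one_add_div_Gamma_le_mittagLeffler hδ (by have := sub_nonneg.2 ht.2; positivity)

/-- Backward (right-sided) weakly singular Gronwall inequality: if a nonnegative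
continuous `u` satisfies `u(t) ≤ φ(t) + ∫_t^1 (ϱ-t)^{-θ} K(t,ϱ) u(ϱ) dϱ`, then `u` is
bounded by `Φ(t) E_{1-θ}(C Γ(1-θ) (1-t)^{1-θ})`, where `Φ(t) = max_{t ≤ s ≤ 1} φ(s)` and
`C` is independent of `u` and `t`. -/
theorem backward_gronwall
    (θ : ℝ) (hθ0 : 0 < θ) (hθ1 : θ < 1)
    (K : ℝ → ℝ → ℝ)
    (hK : ContinuousOn (fun p : ℝ × ℝ => K p.1 p.2)
      {p : ℝ × ℝ | 0 ≤ p.1 ∧ p.1 ≤ p.2 ∧ p.2 ≤ 1}) :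
    ∃ C > 0, ∀ u φ : ℝ → ℝ,
      ContinuousOn u (Set.Icc 0 1) → ContinuousOn φ (Set.Icc 0 1) →
      (∀ t ∈ Set.Icc (0:ℝ) 1, 0 ≤ u t) →
      (∀ t ∈ Set.Icc (0:ℝ) 1, 0 ≤ φ t) →
      (∀ t ∈ Set.Icc (0:ℝ) 1,
        u t ≤ φ t + ∫ ϱ in t..1, (ϱ - t) ^ (-θ) * K t ϱ * u ϱ) →
      ∀ t ∈ Set.Icc (0:ℝ) 1,
        u t ≤ sSup (φ '' Set.Icc t 1) *
          mittagLeffler (1 - θ) (C * Real.Gamma (1 - θ) * (1 - t) ^ (1 - θ)) :=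
  backward_gronwall_general θ hθ1 K hK
end

section
/- Let μ, υ > -1, 0 < ρ ≤ 1 and let k ≥ 0 be an integer. Let f : [0,1] → ℝ be such that the transformed function F(η) := f(1-(1-η)^{1/ρ}) is k-times continuously differentiable on (0,1). Then D_ρ^k f(t) = F^{(k)}(1-(1-t)^ρ) for t ∈ (0,1), and ∫₀¹ ϰ^{μ+k,υ+k,ρ}(t) (D_ρ^k f(t))² dt = ∫₀¹ (1-η)^{μ+k} η^{υ+k} (F^{(k)}(η))² dη; in particular the weighted L² norm of D_ρ^k f with weight ϰ^{μ+k,υ+k,ρ} equals the Jacobi-weighted L² norm of the k-th ordinary derivative of F with weight (1-η)^{μ+k} η^{υ+k}. -/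
open Real MeasureTheory

/-- The backward transformed derivative D_ρ f(t) = ((1-t)^{1-ρ}/ρ) f'(t). -/
noncomputable def backD (ρ : ℝ) (f : ℝ → ℝ) : ℝ → ℝ :=
  fun t => (1 - t) ^ (1 - ρ) / ρ * deriv f t

open Set

/-
The substitution η = 1 - (1 - t)^ρ maps (0,1) monotonically onto itself, with
dη/dt = ρ (1 - t)^(ρ - 1), so the chain rule gives D_ρ (G ∘ η) = G' ∘ η: the backward
transformed derivative is the ordinary derivative in the variable η. Iterating,
D_ρ^k f = F^(k) ∘ η for f = F ∘ η. The weight ϰ^{μ,υ,ρ}(t) is exactly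
(1 - η)^μ η^υ dη/dt, so the weighted integral turns into the Jacobi-weighted one
under the change of variables t ↦ η.
-/

theorem ContDiffOn.hasDerivAt_iteratedDeriv {𝕜 E : Type*} [NontriviallyNormedField 𝕜]
    [NormedAddCommGroup E] [NormedSpace 𝕜 E] {f : 𝕜 → E} {s : Set 𝕜} {x : 𝕜} {n : ℕ}
    {m : WithTop ℕ∞} (hf : ContDiffOn 𝕜 m f s) (hn : (n : WithTop ℕ∞) < m) (hs : IsOpen s)
    (hx : x ∈ s) : HasDerivAt (iteratedDeriv n f) (iteratedDeriv (n + 1) f x) x := by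
  have hd : DifferentiableOn 𝕜 (iteratedDeriv n f) s :=
    (hf.differentiableOn_iteratedDerivWithin hn hs.uniqueDiffOn).congr
      fun y hy => (iteratedDerivWithin_of_isOpen hs hy).symm
  rw [iteratedDeriv_succ]
  exact ((hd x hx).differentiableAt (hs.mem_nhds hx)).hasDerivAt

section Substitution

variable {ρ : ℝ}

theorem hasDerivAt_one_sub_one_sub_rpow {t : ℝ} (ht : t < 1) :
    HasDerivAt (fun s : ℝ => 1 - (1 - s) ^ ρ) (ρ * (1 - t) ^ (ρ - 1)) t :=
  ((((hasDerivAt_id t).const_sub 1).rpow_const (p := ρ)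
    (Or.inl (sub_ne_zero.mpr ht.ne'))).const_sub 1).congr_deriv (by simp)

theorem one_sub_one_sub_rpow_mem_Ioo (hρ : 0 < ρ) {t : ℝ} (ht : t ∈ Ioo (0 : ℝ) 1) :
    1 - (1 - t) ^ ρ ∈ Ioo (0 : ℝ) 1 := by
  have hpos : 0 < (1 - t) ^ ρ := rpow_pos_of_pos (by linarith [ht.2]) ρ
  have hlt : (1 - t) ^ ρ < 1 := rpow_lt_one (by linarith [ht.2]) (by linarith [ht.1]) hρ
  constructor <;> linarith

theorem image_one_sub_one_sub_rpow_Ioo (hρ : 0 < ρ) :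
    (fun t : ℝ => 1 - (1 - t) ^ ρ) '' Ioo 0 1 = Ioo 0 1 := by
  refine Subset.antisymm (image_subset_iff.mpr fun t => one_sub_one_sub_rpow_mem_Ioo hρ)
    fun η hη => ⟨1 - (1 - η) ^ ρ⁻¹, one_sub_one_sub_rpow_mem_Ioo (inv_pos.mpr hρ) hη, ?_⟩
  simp only [sub_sub_cancel]
  rw [rpow_inv_rpow (by linarith [hη.2]) hρ.ne', sub_sub_cancel]

theorem integral_comp_one_sub_one_sub_rpow {E : Type*} [NormedAddCommGroup E]
    [NormedSpace ℝ E] (hρ : 0 < ρ) (φ : ℝ → E) :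
    ∫ t in (0 : ℝ)..1, (ρ * (1 - t) ^ (ρ - 1)) • φ (1 - (1 - t) ^ ρ) = ∫ η in (0 : ℝ)..1, φ η := by
  have hmono : MonotoneOn (fun t : ℝ => 1 - (1 - t) ^ ρ) (Ioo 0 1) := fun a ha b hb hab => by
    have : (1 - b) ^ ρ ≤ (1 - a) ^ ρ := rpow_le_rpow (by linarith [hb.2]) (by linarith) hρ.le
    exact sub_le_sub_left this 1
  have hchange := integral_image_eq_integral_deriv_smul_of_monotoneOn measurableSet_Ioo
    (fun t ht => (hasDerivAt_one_sub_one_sub_rpow (ρ := ρ) ht.2).hasDerivWithinAt) hmono φ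
  rw [image_one_sub_one_sub_rpow_Ioo hρ] at hchange
  simp only [intervalIntegral.integral_of_le zero_le_one, integral_Ioc_eq_integral_Ioo, hchange]

end Substitution

section BackD

variable {ρ : ℝ} {f : ℝ → ℝ}

theorem backD_eqOn_comp (hρ : 0 < ρ) {G G' : ℝ → ℝ}
    (hf : EqOn f (fun t => G (1 - (1 - t) ^ ρ)) (Ioo 0 1))
    (hG : ∀ η ∈ Ioo (0 : ℝ) 1, HasDerivAt G (G' η) η) :
    EqOn (backD ρ f) (fun t => G' (1 - (1 - t) ^ ρ)) (Ioo 0 1) := by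
  intro t ht
  have hpos : 0 < 1 - t := by linarith [ht.2]
  have hderiv : deriv f t = G' (1 - (1 - t) ^ ρ) * (ρ * (1 - t) ^ (ρ - 1)) := by
    rw [(Filter.eventuallyEq_of_mem (isOpen_Ioo.mem_nhds ht) hf).deriv_eq]
    exact ((hG _ (one_sub_one_sub_rpow_mem_Ioo hρ ht)).comp t
      (hasDerivAt_one_sub_one_sub_rpow ht.2)).deriv
  have hcancel : (1 - t) ^ (1 - ρ) * (1 - t) ^ (ρ - 1) = 1 := by
    rw [← rpow_add hpos, show 1 - ρ + (ρ - 1) = 0 by ring, rpow_zero]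
  calc backD ρ f t
      = G' (1 - (1 - t) ^ ρ) * ((1 - t) ^ (1 - ρ) * (1 - t) ^ (ρ - 1)) * (ρ / ρ) := by
        rw [backD, hderiv]
        ring
    _ = G' (1 - (1 - t) ^ ρ) := by rw [hcancel, div_self hρ.ne', mul_one, mul_one]

theorem backD_iterate_eqOn (hρ : 0 < ρ) {F : ℝ → ℝ} {k : ℕ}
    (hF : ContDiffOn ℝ k F (Ioo 0 1)) (hf : EqOn f (fun t => F (1 - (1 - t) ^ ρ)) (Ioo 0 1)) :
    EqOn ((backD ρ)^[k] f) (fun t => iteratedDeriv k F (1 - (1 - t) ^ ρ)) (Ioo 0 1) := by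
  induction k with
  | zero => simpa using hf
  | succ k ih =>
    rw [Function.iterate_succ']
    exact backD_eqOn_comp hρ (ih (hF.of_le (by exact_mod_cast k.le_succ)))
      fun η hη => hF.hasDerivAt_iteratedDeriv (by exact_mod_cast k.lt_succ_self) isOpen_Ioo hη

end BackD

theorem backWeight_eq_mul_jacobiWeight (μ υ ρ : ℝ) {t : ℝ} (ht : t < 1) :
    backWeight μ υ ρ t = ρ * (1 - t) ^ (ρ - 1) *
      ((1 - (1 - (1 - t) ^ ρ)) ^ μ * (1 - (1 - t) ^ ρ) ^ υ) := by
  have hpos : 0 < 1 - t := by linarith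
  rw [backWeight, sub_sub_cancel, ← rpow_mul hpos.le,
    show ρ * (μ + 1) - 1 = ρ - 1 + ρ * μ by ring, rpow_add hpos]
  ring

theorem backD_transform_identity_general
    (μ υ ρ : ℝ) (hρ0 : 0 < ρ) (k : ℕ)
    (f : ℝ → ℝ)
    (hF : ContDiffOn ℝ k (fun η : ℝ => f (1 - (1 - η) ^ (1 / ρ))) (Set.Ioo 0 1)) :
    (∀ t ∈ Set.Ioo (0:ℝ) 1,
      (backD ρ)^[k] f t
        = iteratedDeriv k (fun η : ℝ => f (1 - (1 - η) ^ (1 / ρ))) (1 - (1 - t) ^ ρ)) ∧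
    (∫ t in (0:ℝ)..1, backWeight (μ + (k : ℝ)) (υ + (k : ℝ)) ρ t * ((backD ρ)^[k] f t) ^ 2
      = ∫ η in (0:ℝ)..1, (1 - η) ^ (μ + (k : ℝ)) * η ^ (υ + (k : ℝ)) *
          (iteratedDeriv k (fun η : ℝ => f (1 - (1 - η) ^ (1 / ρ))) η) ^ 2) := by
  set F : ℝ → ℝ := fun η => f (1 - (1 - η) ^ (1 / ρ))
  have hf : EqOn f (fun t => F (1 - (1 - t) ^ ρ)) (Ioo 0 1) := fun t ht => by
    simp only [F, sub_sub_cancel, one_div]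
    rw [rpow_rpow_inv (by linarith [ht.2]) hρ0.ne', sub_sub_cancel]
  have hD := backD_iterate_eqOn hρ0 hF hf
  refine ⟨hD, ?_⟩
  refine Eq.trans ?_ (integral_comp_one_sub_one_sub_rpow hρ0 _)
  refine intervalIntegral.integral_congr_Ioo_of_le zero_le_one fun t ht => ?_
  simp only [hD ht, backWeight_eq_mul_jacobiWeight _ _ ρ ht.2, smul_eq_mul]
  ring

/-- The backward transformed derivative corresponds to the ordinary derivative of the
transformed function F(η) = f(1-(1-η)^{1/ρ}), and the weighted L² norm of D_ρ^k f with
weight ϰ^{μ+k,υ+k,ρ} equals the Jacobi-weighted L² norm of F⁽ᵏ⁾. -/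
theorem backD_transform_identity
    (μ υ ρ : ℝ) (hμ : -1 < μ) (hυ : -1 < υ) (hρ0 : 0 < ρ) (hρ1 : ρ ≤ 1) (k : ℕ)
    (f : ℝ → ℝ)
    (hF : ContDiffOn ℝ k (fun η : ℝ => f (1 - (1 - η) ^ (1 / ρ))) (Set.Ioo 0 1)) :
    (∀ t ∈ Set.Ioo (0:ℝ) 1,
      (backD ρ)^[k] f t
        = iteratedDeriv k (fun η : ℝ => f (1 - (1 - η) ^ (1 / ρ))) (1 - (1 - t) ^ ρ)) ∧
    (∫ t in (0:ℝ)..1, backWeight (μ + (k : ℝ)) (υ + (k : ℝ)) ρ t * ((backD ρ)^[k] f t) ^ 2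
      = ∫ η in (0:ℝ)..1, (1 - η) ^ (μ + (k : ℝ)) * η ^ (υ + (k : ℝ)) *
          (iteratedDeriv k (fun η : ℝ => f (1 - (1 - η) ^ (1 / ρ))) η) ^ 2) :=
  backD_transform_identity_general μ υ ρ hρ0 k f hF
end

section
/- Let μ, υ > -1, 0 < ρ ≤ 1 and N ∈ ℕ. Then for every φ in span{ 𝒫_0^{μ,υ,ρ}, …, 𝒫_N^{μ,υ,ρ} } (equivalently, every φ ∈ P_N^ρ), ∫₀¹ ϰ̃^{μ,υ,ρ}(t) (φ'(t))² dt ≤ σ_N^{μ,υ} ∫₀¹ ϰ^{μ,υ,ρ}(t) φ(t)² dt, where σ_N^{μ,υ} = N(N+μ+υ+1) and ϰ̃^{μ,υ,ρ}(t) = ρ^{-1} (1-t)^{ρμ+1} (1-(1-t)^ρ)^{υ+1}. -/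
/-!
Write `y = (1-t)^ρ`, so that `P_N^ρ` consists of the polynomials of degree `≤ N` in `y`. The
Sturm–Liouville operator of `ϰ`, `T P = y(y-1)P'' + ((μ+υ+2)y - (μ+1))P'`, is symmetric for
`⟨P, R⟩ = ∫₀¹ ϰ P(y) R(y)`, and `⟨T P, P⟩ = ∫₀¹ ϰ̃ (φ')²`: integrate by parts, the boundary terms
vanish because `μ, υ > -1`. On polynomials of degree `≤ N`, `T` is upper triangular with diagonal
`σ_0 < ⋯ < σ_N`, so it is diagonalisable with `⟨·,·⟩`-orthogonal eigenvectors, whence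
`⟨T P, P⟩ ≤ σ_N ⟨P, P⟩`.
-/

open Real MeasureTheory Finset

/-- The auxiliary weight ϰ̃^{μ,υ,ρ}(t) = ρ⁻¹ (1-t)^{ρμ+1} (1-(1-t)^ρ)^{υ+1}. -/
noncomputable def backWeightTilde (μ υ ρ t : ℝ) : ℝ :=
  ρ⁻¹ * (1 - t) ^ (ρ * μ + 1) * (1 - (1 - t) ^ ρ) ^ (υ + 1)

open Polynomial intervalIntegral

lemma intervalIntegrable_rpow_mul_one_sub_rpow {a b : ℝ} (ha : -1 < a) (hb : -1 < b) :
    IntervalIntegrable (fun t : ℝ => t ^ a * (1 - t) ^ b) volume 0 1 := by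
  have hβ := (Complex.betaIntegral_convergent (u := (a + 1 : ℝ)) (v := (b + 1 : ℝ))
    (by rw [Complex.ofReal_re]; linarith) (by rw [Complex.ofReal_re]; linarith)).norm
  rw [intervalIntegrable_iff_integrableOn_Ioo_of_le zero_le_one] at hβ ⊢
  refine hβ.congr_fun (fun t ⟨ht0, ht1⟩ => ?_) measurableSet_Ioo
  have h1t : 0 < 1 - t := by linarith
  simp only [← Complex.ofReal_one, ← Complex.ofReal_sub, norm_mul,
    Complex.norm_cpow_eq_rpow_re_of_pos ht0, Complex.norm_cpow_eq_rpow_re_of_pos h1t]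
  norm_num

section BackwardVariable

variable {ρ t : ℝ}

lemma mul_le_one_sub_one_sub_rpow (hρ0 : 0 ≤ ρ) (hρ1 : ρ ≤ 1) (ht : t ≤ 1) :
    ρ * t ≤ 1 - (1 - t) ^ ρ := by
  have := rpow_one_add_le_one_add_mul_self (s := -t) (by linarith) hρ0 hρ1
  rw [← sub_eq_add_neg] at this
  linarith

lemma one_sub_one_sub_rpow_le (hρ1 : ρ ≤ 1) (ht0 : 0 ≤ t) (ht1 : t < 1) :
    1 - (1 - t) ^ ρ ≤ t := by
  have := rpow_le_rpow_of_exponent_ge (x := 1 - t) (by linarith) (by linarith) hρ1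
  rw [rpow_one] at this
  linarith

lemma one_sub_one_sub_rpow_pos (hρ0 : 0 < ρ) (ht0 : 0 < t) (ht1 : t ≤ 1) :
    0 < 1 - (1 - t) ^ ρ := by
  have := rpow_lt_one (x := 1 - t) (by linarith) (by linarith) hρ0
  linarith

lemma hasDerivAt_one_sub_rpow (p : ℝ) (ht : t < 1) :
    HasDerivAt (fun t => (1 - t) ^ p) (-(p * (1 - t) ^ (p - 1))) t := by
  have := ((hasDerivAt_id t).const_sub 1).rpow_const (p := p) (Or.inl (sub_ne_zero.mpr ht.ne'))
  simpa [mul_comm] using this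

end BackwardVariable

lemma measurable_backWeight (μ υ ρ : ℝ) : Measurable (backWeight μ υ ρ) := by
  unfold backWeight; fun_prop

lemma intervalIntegrable_backWeight {μ υ ρ : ℝ} (hμ : -1 < μ) (hυ : -1 < υ) (hρ0 : 0 < ρ)
    (hρ1 : ρ ≤ 1) : IntervalIntegrable (backWeight μ υ ρ) volume 0 1 := by
  have hβ := (intervalIntegrable_rpow_mul_one_sub_rpow hυ
    (b := ρ * (μ + 1) - 1) (by nlinarith)).const_mul (ρ * max 1 (ρ ^ υ))
  rw [intervalIntegrable_iff_integrableOn_Ioo_of_le zero_le_one] at hβ ⊢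
  refine hβ.mono' (measurable_backWeight μ υ ρ).aestronglyMeasurable.restrict ?_
  filter_upwards [ae_restrict_mem measurableSet_Ioo] with t ⟨ht0, ht1⟩
  have hz := one_sub_one_sub_rpow_pos hρ0 ht0 ht1.le
  -- `ρ t ≤ 1 - (1 - t)^ρ ≤ t` compares `(1 - (1 - t)^ρ)^υ` with `t^υ` for either sign of `υ`
  have hcmp : (1 - (1 - t) ^ ρ) ^ υ ≤ max 1 (ρ ^ υ) * t ^ υ := by
    rcases le_or_gt 0 υ with hυ0 | hυ0
    · calc (1 - (1 - t) ^ ρ) ^ υ ≤ t ^ υ :=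
            rpow_le_rpow hz.le (one_sub_one_sub_rpow_le hρ1 ht0.le ht1) hυ0
        _ ≤ max 1 (ρ ^ υ) * t ^ υ := le_mul_of_one_le_left (by positivity) (le_max_left _ _)
    · calc (1 - (1 - t) ^ ρ) ^ υ ≤ (ρ * t) ^ υ :=
            rpow_le_rpow_of_nonpos (by positivity)
              (mul_le_one_sub_one_sub_rpow hρ0.le hρ1 ht1.le) hυ0.le
        _ = ρ ^ υ * t ^ υ := mul_rpow hρ0.le ht0.le
        _ ≤ max 1 (ρ ^ υ) * t ^ υ := by gcongr; exact le_max_right _ _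
  rw [norm_of_nonneg (by unfold backWeight; positivity)]
  calc backWeight μ υ ρ t ≤ ρ * (1 - t) ^ (ρ * (μ + 1) - 1) * (max 1 (ρ ^ υ) * t ^ υ) := by
        unfold backWeight; gcongr
    _ = _ := by ring

section MomentFunctional

noncomputable def momentFunctional (a b : ℝ) (w y : ℝ → ℝ) : ℝ[X] →ₗ[ℝ] ℝ :=
  lsum fun n => (∫ t in a..b, w t * y t ^ n) • LinearMap.id

variable {a b : ℝ} {w y : ℝ → ℝ}

lemma mul_eval_eq_sum (S : ℝ[X]) (c x : ℝ) :
    c * S.eval x = ∑ n ∈ S.support, S.coeff n * (c * x ^ n) := by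
  rw [eval_eq_sum, Polynomial.sum_def, Finset.mul_sum]
  exact Finset.sum_congr rfl fun n _ => by ring

variable (hw : ∀ n : ℕ, IntervalIntegrable (fun t => w t * y t ^ n) volume a b)
include hw

lemma intervalIntegrable_mul_eval (S : ℝ[X]) :
    IntervalIntegrable (fun t => w t * S.eval (y t)) volume a b := by
  simpa only [mul_eval_eq_sum, Finset.sum_fn] using
    IntervalIntegrable.sum S.support fun n _ => (hw n).const_mul (S.coeff n)

lemma momentFunctional_apply (S : ℝ[X]) :
    momentFunctional a b w y S = ∫ t in a..b, w t * S.eval (y t) := by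
  simp_rw [mul_eval_eq_sum]
  rw [integral_finsetSum fun n _ => (hw n).const_mul (S.coeff n)]
  simp [momentFunctional, lsum_apply, Polynomial.sum_def, mul_comm]

end MomentFunctional

section JacobiOperator

variable (μ υ : ℝ)

/-- In the variable `y = (1-t)^ρ`, `jacobiFlux μ υ G` is
`ϰ⁻¹ (d/dt)((1-t)^{ρ(μ+1)} (1-y)^{υ+1} G(y))`. -/
noncomputable def jacobiFlux : ℝ[X] →ₗ[ℝ] ℝ[X] :=
  LinearMap.mulLeft ℝ (C (μ + υ + 2) * X - C (μ + 1)) +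
    LinearMap.mulLeft ℝ (X * (X - 1)) ∘ₗ derivative

/-- The Sturm–Liouville operator of the weight `ϰ^{μ,υ,ρ}`, written in `y = (1-t)^ρ`. -/
noncomputable def jacobiOp : ℝ[X] →ₗ[ℝ] ℝ[X] := jacobiFlux μ υ ∘ₗ derivative

noncomputable def jacobiEigenvalue (k : ℕ) : ℝ := k * (k + μ + υ + 1)

variable {μ υ}

lemma jacobiFlux_apply (G : ℝ[X]) :
    jacobiFlux μ υ G = (C (μ + υ + 2) * X - C (μ + 1)) * G + X * (X - 1) * derivative G := by
  simp [jacobiFlux, mul_assoc]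

lemma jacobiOp_apply (P : ℝ[X]) :
    jacobiOp μ υ P = jacobiFlux μ υ (derivative P) := rfl

lemma jacobiFlux_derivative_mul (P R : ℝ[X]) :
    jacobiFlux μ υ (derivative P * R) =
      jacobiOp μ υ P * R - X * (1 - X) * (derivative P * derivative R) := by
  simp only [jacobiOp_apply, jacobiFlux_apply, derivative_mul]
  ring

lemma coeff_X_mul_derivative (G : ℝ[X]) (j : ℕ) :
    (X * derivative G).coeff j = j * G.coeff j := by
  cases j with
  | zero => simp
  | succ j => simp [coeff_derivative, mul_comm]

lemma coeff_jacobiOp (P : ℝ[X]) (j : ℕ) :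
    (jacobiOp μ υ P).coeff j =
      jacobiEigenvalue μ υ j * P.coeff j - (j + 1) * (j + 1 + μ) * P.coeff (j + 1) := by
  have hP : jacobiOp μ υ P =
      X * derivative (X * derivative P) + C (μ + υ + 1) * (X * derivative P) -
        X * derivative (derivative P) - C (μ + 1) * derivative P := by
    simp only [jacobiOp_apply, jacobiFlux_apply, derivative_mul, derivative_X, map_add, map_one,
      map_ofNat]
    ring
  simp only [hP, coeff_add, coeff_sub, coeff_C_mul, coeff_X_mul_derivative, coeff_derivative,
    jacobiEigenvalue]
  ring

lemma degree_jacobiOp_sub_smul_lt {P : ℝ[X]} {n : ℕ} (hP : P.degree < ↑(n + 1)) :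
    (jacobiOp μ υ P - jacobiEigenvalue μ υ n • P).degree < n := by
  rw [degree_lt_iff_coeff_zero] at hP ⊢
  intro j hj
  simp only [coeff_sub, coeff_smul, coeff_jacobiOp, smul_eq_mul, hP (j + 1) (by omega)]
  rcases hj.eq_or_lt with rfl | hj
  · ring
  · rw [hP j hj]; ring

lemma aeval_nodal_jacobiOp_apply {P : ℝ[X]} {n : ℕ} (hP : P.degree < n) :
    aeval (jacobiOp μ υ) (Lagrange.nodal (range n) (jacobiEigenvalue μ υ)) P = 0 := by
  induction n generalizing P with
  | zero => simpa using hP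
  | succ n ih =>
    rw [Lagrange.nodal, prod_range_succ, map_mul, Module.End.mul_apply, map_sub, aeval_X, aeval_C]
    exact ih (degree_jacobiOp_sub_smul_lt hP)

lemma jacobiEigenvalue_strictMono (h : -2 < μ + υ) : StrictMono (jacobiEigenvalue μ υ) :=
  strictMono_nat_of_lt_succ fun k => by
    simp only [jacobiEigenvalue]; push_cast; nlinarith [(k.cast_nonneg : (0 : ℝ) ≤ k)]

end JacobiOperator

section RayleighBound

variable {𝕜 V ι : Type*} [Field 𝕜] [AddCommGroup V] [Module 𝕜 V] [DecidableEq ι]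

lemma apply_aeval_basis_of_aeval_nodal_eq_zero (T : Module.End 𝕜 V) {s : Finset ι} {v : ι → 𝕜}
    {i : ι} (hi : i ∈ s) {x : V} (hx : aeval T (Lagrange.nodal s v) x = 0) :
    T (aeval T (Lagrange.basis s v i) x) = v i • aeval T (Lagrange.basis s v i) x := by
  have h : (X - C (v i)) * Lagrange.basis s v i =
      C (Lagrange.nodalWeight s v i) * Lagrange.nodal s v := by
    rw [Lagrange.basis_eq_prod_sub_inv_mul_nodal_div hi, ← Lagrange.nodal_erase_eq_nodal_div hi,
      Lagrange.nodal_eq_mul_nodal_erase hi]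
    ring
  simpa only [map_mul, map_sub, aeval_X, aeval_C, Module.End.mul_apply, hx, map_zero,
    LinearMap.sub_apply, Module.algebraMap_end_apply, sub_eq_zero] using
    congr_arg (fun p => aeval T p x) h

/-- Lagrange interpolation splits `x` into eigenvectors of `T`, which are `B`-orthogonal. -/
theorem LinearMap.BilinForm.apply_le_mul_of_aeval_nodal_eq_zero [LinearOrder 𝕜]
    [IsStrictOrderedRing 𝕜] (B : LinearMap.BilinForm 𝕜 V) (T : Module.End 𝕜 V)
    (hB : ∀ x, 0 ≤ B x x) (hT : ∀ x y, B (T x) y = B x (T y))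
    {s : Finset ι} {v : ι → 𝕜} (hv : Set.InjOn v s) {c : 𝕜} (hc : ∀ i ∈ s, v i ≤ c) {x : V}
    (hx : aeval T (Lagrange.nodal s v) x = 0) : B (T x) x ≤ c * B x x := by
  rcases s.eq_empty_or_nonempty with rfl | hs
  · simp only [Lagrange.nodal_empty, map_one, Module.End.one_apply] at hx
    simp [hx]
  set e : ι → V := fun i => aeval T (Lagrange.basis s v i) x
  have hsum : ∑ i ∈ s, e i = x := by
    simp only [e, ← LinearMap.sum_apply, ← map_sum, Lagrange.sum_basis hv hs, map_one,
      Module.End.one_apply]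
  have heig : ∀ i ∈ s, T (e i) = v i • e i := fun i hi =>
    apply_aeval_basis_of_aeval_nodal_eq_zero T hi hx
  have horth : ∀ i ∈ s, ∀ j ∈ s, i ≠ j → B (e i) (e j) = 0 := by
    intro i hi j hj hij
    have h := hT (e i) (e j)
    rw [heig i hi, heig j hj, map_smul, map_smul, LinearMap.smul_apply, smul_eq_mul,
      smul_eq_mul] at h
    exact (mul_eq_zero.mp (by linarith : (v i - v j) * B (e i) (e j) = 0)).resolve_left
      (sub_ne_zero.mpr (hv.ne hi hj hij))
  have hdiag : ∀ a : ι → 𝕜,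
      B (∑ i ∈ s, a i • e i) (∑ j ∈ s, e j) = ∑ i ∈ s, a i * B (e i) (e i) := by
    intro a
    simp only [map_sum, LinearMap.sum_apply, map_smul, LinearMap.smul_apply, smul_eq_mul]
    refine Finset.sum_congr rfl fun i hi => ?_
    rw [Finset.sum_eq_single_of_mem i hi fun j hj hji => by rw [horth j hj i hi hji, mul_zero]]
  have hTx : T x = ∑ i ∈ s, v i • e i := by
    rw [← hsum, map_sum]; exact Finset.sum_congr rfl heig
  calc B (T x) x = ∑ i ∈ s, v i * B (e i) (e i) := by rw [hTx, ← hsum, hdiag]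
    _ ≤ ∑ i ∈ s, c * B (e i) (e i) :=
      Finset.sum_le_sum fun i hi => mul_le_mul_of_nonneg_right (hc i hi) (hB _)
    _ = c * B x x := by
      have h1 := hdiag 1
      simp only [Pi.one_apply, one_smul, one_mul] at h1
      rw [← Finset.mul_sum, ← hsum, h1]

end RayleighBound

section BackwardJacobi

variable {μ υ ρ : ℝ}

lemma backWeight_mul_rpow_pow {t : ℝ} (ht : t < 1) (n : ℕ) :
    backWeight μ υ ρ t * ((1 - t) ^ ρ) ^ n = backWeight (μ + n) υ ρ t := by
  have h1t : 0 < 1 - t := by linarith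
  rw [← rpow_natCast, ← rpow_mul h1t.le, backWeight, backWeight, mul_right_comm, mul_assoc ρ,
    ← rpow_add h1t]
  ring_nf

lemma hasDerivAt_jacobiFlux (hρ0 : 0 < ρ) {t : ℝ} (ht : t ∈ Set.Ioo 0 1) (G : ℝ[X]) :
    HasDerivAt
      (fun t => (1 - t) ^ (ρ * (μ + 1)) * (1 - (1 - t) ^ ρ) ^ (υ + 1) * G.eval ((1 - t) ^ ρ))
      (backWeight μ υ ρ t * (jacobiFlux μ υ G).eval ((1 - t) ^ ρ)) t := by
  obtain ⟨ht0, ht1⟩ := ht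
  have hs : 0 < 1 - t := by linarith
  have hz := one_sub_one_sub_rpow_pos hρ0 ht0 ht1.le
  have hy := hasDerivAt_one_sub_rpow ρ ht1
  have hF := ((hasDerivAt_one_sub_rpow (ρ * (μ + 1)) ht1).mul
    ((hy.const_sub 1).rpow_const (p := υ + 1) (Or.inl hz.ne'))).mul
    ((G.hasDerivAt _).comp t hy)
  refine hF.congr_deriv ?_
  have e1 : (1 - t) ^ (ρ * (μ + 1)) = (1 - t) ^ (ρ * (μ + 1) - 1) * (1 - t) := by
    rw [← rpow_add_one hs.ne']; ring_nf
  have e2 : (1 - t) * (1 - t) ^ (ρ - 1) = (1 - t) ^ ρ := by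
    rw [← rpow_one_add' hs.le (by linarith)]; ring_nf
  have e3 : (1 - (1 - t) ^ ρ) ^ (υ + 1) = (1 - (1 - t) ^ ρ) ^ υ * (1 - (1 - t) ^ ρ) :=
    rpow_add_one hz.ne' υ
  simp only [Pi.mul_apply, Function.comp_apply, jacobiFlux_apply, eval_add, eval_sub, eval_mul,
    eval_C, eval_X, eval_one, backWeight, add_sub_cancel_right, e1, e3]
  linear_combination (ρ * (1 - t) ^ (ρ * (μ + 1) - 1) * (1 - (1 - t) ^ ρ) ^ υ *
    ((υ + 1) * G.eval ((1 - t) ^ ρ) - (1 - (1 - t) ^ ρ) * (derivative G).eval ((1 - t) ^ ρ))) * e2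

lemma backWeight_nonneg (hρ0 : 0 ≤ ρ) {t : ℝ} (ht : t ∈ Set.Icc 0 1) :
    0 ≤ backWeight μ υ ρ t := by
  obtain ⟨ht0, ht1⟩ := ht
  have hz : 0 ≤ 1 - (1 - t) ^ ρ := sub_nonneg.mpr (rpow_le_one (by linarith) (by linarith) hρ0)
  have hs := rpow_nonneg (sub_nonneg.mpr ht1) (ρ * (μ + 1) - 1)
  unfold backWeight
  positivity

lemma backWeightTilde_mul_sq (hρ0 : 0 < ρ) {t : ℝ} (ht : t ∈ Set.Ioo 0 1) :
    backWeightTilde μ υ ρ t * (ρ * (1 - t) ^ (ρ - 1)) ^ 2 =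
      backWeight μ υ ρ t * ((1 - t) ^ ρ * (1 - (1 - t) ^ ρ)) := by
  have hs : 0 < 1 - t := by linarith [ht.2]
  have hz := one_sub_one_sub_rpow_pos hρ0 ht.1 ht.2.le
  have e1 : (1 - t) ^ (ρ * μ + 1) * ((1 - t) ^ (ρ - 1)) ^ 2 =
      (1 - t) ^ (ρ * (μ + 1) - 1) * (1 - t) ^ ρ := by
    rw [← rpow_natCast, ← rpow_mul hs.le, ← rpow_add hs, ← rpow_add hs]; ring_nf
  have hinv : ρ⁻¹ * ρ = 1 := inv_mul_cancel₀ hρ0.ne'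
  rw [backWeightTilde, backWeight, rpow_add_one hz.ne']
  linear_combination ρ * (1 - (1 - t) ^ ρ) ^ υ * (1 - (1 - t) ^ ρ) * e1 +
    ρ * (1 - t) ^ (ρ * μ + 1) * ((1 - t) ^ (ρ - 1)) ^ 2 * (1 - (1 - t) ^ ρ) ^ υ *
      (1 - (1 - t) ^ ρ) * hinv

section Integrals

variable (hμ : -1 < μ) (hυ : -1 < υ) (hρ0 : 0 < ρ) (hρ1 : ρ ≤ 1)
include hμ hυ hρ0 hρ1

lemma intervalIntegrable_backWeight_mul_pow (n : ℕ) :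
    IntervalIntegrable (fun t => backWeight μ υ ρ t * ((1 - t) ^ ρ) ^ n) volume 0 1 := by
  have := intervalIntegrable_backWeight (μ := μ + n) (by linarith [n.cast_nonneg (α := ℝ)])
    hυ hρ0 hρ1
  rw [intervalIntegrable_iff_integrableOn_Ioo_of_le zero_le_one] at this ⊢
  exact this.congr_fun (fun t ht => (backWeight_mul_rpow_pow ht.2 n).symm) measurableSet_Ioo

/-- Integration by parts against `ϰ`: the boundary terms vanish since `μ, υ > -1`. -/
lemma integral_backWeight_mul_jacobiFlux (G : ℝ[X]) :
    ∫ t in (0 : ℝ)..1, backWeight μ υ ρ t * (jacobiFlux μ υ G).eval ((1 - t) ^ ρ) = 0 := by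
  have hF : Continuous fun t : ℝ =>
      (1 - t) ^ (ρ * (μ + 1)) * (1 - (1 - t) ^ ρ) ^ (υ + 1) * G.eval ((1 - t) ^ ρ) := by
    have h1 : Continuous fun t : ℝ => (1 - t) ^ ρ :=
      (continuous_const.sub continuous_id).rpow_const fun _ => Or.inr hρ0.le
    refine ((continuous_const.sub continuous_id).rpow_const fun _ => Or.inr (by nlinarith)).mul
      ((continuous_const.sub h1).rpow_const fun _ => Or.inr (by linarith)) |>.mul
      ((G.continuous).comp h1)
  rw [integral_eq_sub_of_hasDerivAt_of_le zero_le_one hF.continuousOn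
    (fun t ht => hasDerivAt_jacobiFlux hρ0 ht G)
    (intervalIntegrable_mul_eval (intervalIntegrable_backWeight_mul_pow hμ hυ hρ0 hρ1) _)]
  simp [zero_rpow (by nlinarith : ρ * (μ + 1) ≠ 0), zero_rpow (by linarith : υ + 1 ≠ 0),
    zero_rpow hρ0.ne']

end Integrals

end BackwardJacobi

section BackwardForm

variable {μ υ ρ : ℝ}

noncomputable def backForm (μ υ ρ : ℝ) : LinearMap.BilinForm ℝ ℝ[X] :=
  (LinearMap.mul ℝ ℝ[X]).compr₂ (momentFunctional 0 1 (backWeight μ υ ρ) fun t => (1 - t) ^ ρ)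

variable (hμ : -1 < μ) (hυ : -1 < υ) (hρ0 : 0 < ρ) (hρ1 : ρ ≤ 1)
include hμ hυ hρ0 hρ1

lemma backForm_apply (P R : ℝ[X]) :
    backForm μ υ ρ P R =
      ∫ t in (0 : ℝ)..1, backWeight μ υ ρ t * (P.eval ((1 - t) ^ ρ) * R.eval ((1 - t) ^ ρ)) := by
  simp [backForm, momentFunctional_apply (intervalIntegrable_backWeight_mul_pow hμ hυ hρ0 hρ1)]

lemma backForm_self_nonneg (P : ℝ[X]) : 0 ≤ backForm μ υ ρ P P := by
  rw [backForm_apply hμ hυ hρ0 hρ1]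
  exact integral_nonneg zero_le_one fun t ht =>
    mul_nonneg (backWeight_nonneg hρ0.le ht) (mul_self_nonneg _)

lemma backForm_jacobiOp_left (P R : ℝ[X]) :
    backForm μ υ ρ (jacobiOp μ υ P) R =
      momentFunctional 0 1 (backWeight μ υ ρ) (fun t => (1 - t) ^ ρ)
        (X * (1 - X) * (derivative P * derivative R)) := by
  have h := integral_backWeight_mul_jacobiFlux hμ hυ hρ0 hρ1 (derivative P * R)
  rw [← momentFunctional_apply (intervalIntegrable_backWeight_mul_pow hμ hυ hρ0 hρ1),
    jacobiFlux_derivative_mul, map_sub, sub_eq_zero] at h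
  simpa [backForm] using h

lemma backForm_jacobiOp_comm (P R : ℝ[X]) :
    backForm μ υ ρ (jacobiOp μ υ P) R = backForm μ υ ρ P (jacobiOp μ υ R) := by
  have hsymm : ∀ P R : ℝ[X], backForm μ υ ρ P R = backForm μ υ ρ R P := fun P R => by
    simp [backForm, mul_comm]
  rw [hsymm P, backForm_jacobiOp_left hμ hυ hρ0 hρ1, backForm_jacobiOp_left hμ hυ hρ0 hρ1,
    mul_comm (derivative P)]

end BackwardForm

section BackwardPolynomials

variable {ρ : ℝ}

/-- `P ↦ ∑ₖ Pₖ (1-t)^{ρk}`; it maps `degreeLT ℝ (N+1)` onto `P_N^ρ`. -/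
noncomputable def backPoly (ρ : ℝ) : ℝ[X] →ₗ[ℝ] ℝ → ℝ :=
  lsum fun k => LinearMap.id.smulRight fun t => (1 - t) ^ (ρ * k)

lemma backPoly_X_pow (k : ℕ) : backPoly ρ (X ^ k) = fun t => (1 - t) ^ (ρ * k) := by
  simp [backPoly, ← monomial_one_right_eq_X_pow]

lemma backPoly_apply_of_le_one (P : ℝ[X]) {t : ℝ} (ht : t ≤ 1) :
    backPoly ρ P t = P.eval ((1 - t) ^ ρ) := by
  simp only [backPoly, lsum_apply, eval_eq_sum, Polynomial.sum_def, Finset.sum_apply]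
  refine Finset.sum_congr rfl fun k _ => ?_
  simp [rpow_mul (sub_nonneg.mpr ht)]

lemma hasDerivAt_backPoly (P : ℝ[X]) {t : ℝ} (ht : t < 1) :
    HasDerivAt (backPoly ρ P)
      ((derivative P).eval ((1 - t) ^ ρ) * -(ρ * (1 - t) ^ (ρ - 1))) t := by
  refine ((P.hasDerivAt _).comp t (hasDerivAt_one_sub_rpow ρ ht)).congr_of_eventuallyEq ?_
  filter_upwards [Iio_mem_nhds ht] with s hs using backPoly_apply_of_le_one P (le_of_lt hs)

lemma backJacobi_mem_map_backPoly (μ υ : ℝ) {r n : ℕ} (hr : r < n) :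
    backJacobi μ υ ρ r ∈ (degreeLT ℝ n).map (backPoly ρ) := by
  have h : backJacobi μ υ ρ r = ∑ k ∈ Finset.range (r + 1),
      (Real.Gamma (r + μ + 1) / (r.factorial * Real.Gamma (r + μ + υ + 1)) *
        (r.choose k * (-1) ^ k * (Real.Gamma (r + k + μ + υ + 1) / Real.Gamma (k + μ + 1)))) •
        backPoly ρ (X ^ k) := by
    ext t
    simp [backJacobi, backPoly_X_pow, Finset.mul_sum, mul_assoc]
  rw [h]
  refine Submodule.sum_mem _ fun k hk => Submodule.smul_mem _ _ ⟨X ^ k, ?_, rfl⟩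
  rw [SetLike.mem_coe, mem_degreeLT, degree_X_pow]
  exact_mod_cast (Finset.mem_range.mp hk).trans_le hr

lemma span_backJacobi_le_map_backPoly (μ υ : ℝ) (N : ℕ) :
    Submodule.span ℝ ((fun r : ℕ => backJacobi μ υ ρ r) '' {r | r ≤ N}) ≤
      (degreeLT ℝ (N + 1)).map (backPoly ρ) :=
  Submodule.span_le.mpr fun _ ⟨_, hr, hφr⟩ =>
    hφr ▸ backJacobi_mem_map_backPoly μ υ (Nat.lt_succ_of_le hr)

end BackwardPolynomials

section Inequality

variable {μ υ ρ : ℝ} (hμ : -1 < μ) (hυ : -1 < υ) (hρ0 : 0 < ρ) (hρ1 : ρ ≤ 1)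
include hμ hυ hρ0 hρ1

lemma integral_backWeight_mul_backPoly_sq (P : ℝ[X]) :
    ∫ t in (0 : ℝ)..1, backWeight μ υ ρ t * backPoly ρ P t ^ 2 = backForm μ υ ρ P P := by
  rw [backForm_apply hμ hυ hρ0 hρ1]
  refine integral_congr_Ioo_of_le zero_le_one fun t ht => ?_
  rw [backPoly_apply_of_le_one P ht.2.le, sq]

lemma integral_backWeightTilde_mul_deriv_backPoly_sq (P : ℝ[X]) :
    ∫ t in (0 : ℝ)..1, backWeightTilde μ υ ρ t * deriv (backPoly ρ P) t ^ 2 =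
      backForm μ υ ρ (jacobiOp μ υ P) P := by
  rw [backForm_jacobiOp_left hμ hυ hρ0 hρ1,
    momentFunctional_apply (intervalIntegrable_backWeight_mul_pow hμ hυ hρ0 hρ1)]
  refine integral_congr_Ioo_of_le zero_le_one fun t ht => ?_
  rw [(hasDerivAt_backPoly P ht.2).deriv]
  simp only [eval_mul, eval_sub, eval_X, eval_one]
  linear_combination (derivative P).eval ((1 - t) ^ ρ) ^ 2 * backWeightTilde_mul_sq hρ0 ht

lemma backForm_jacobiOp_le {N : ℕ} {P : ℝ[X]} (hP : P ∈ degreeLT ℝ (N + 1)) :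
    backForm μ υ ρ (jacobiOp μ υ P) P ≤ jacobiEigenvalue μ υ N * backForm μ υ ρ P P := by
  have hσ := jacobiEigenvalue_strictMono (μ := μ) (υ := υ) (by linarith)
  exact (backForm μ υ ρ).apply_le_mul_of_aeval_nodal_eq_zero (jacobiOp μ υ)
    (backForm_self_nonneg hμ hυ hρ0 hρ1) (backForm_jacobiOp_comm hμ hυ hρ0 hρ1)
    hσ.injective.injOn (fun j hj => hσ.monotone (Nat.lt_succ_iff.mp (mem_range.mp hj)))
    (aeval_nodal_jacobiOp_apply (mem_degreeLT.mp hP))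

end Inequality

/-- Inverse inequality: for every φ in the span of the first N+1 fractional backward
Jacobi functions, the ϰ̃-weighted L² norm of φ' is bounded by σ_N^{μ,υ} = N(N+μ+υ+1)
times the ϰ-weighted L² norm of φ. -/
theorem inverse_inequality_first_deriv
    (μ υ ρ : ℝ) (hμ : -1 < μ) (hυ : -1 < υ) (hρ0 : 0 < ρ) (hρ1 : ρ ≤ 1) (N : ℕ) :
    ∀ φ : ℝ → ℝ, φ ∈ Submodule.span ℝ ((fun r : ℕ => backJacobi μ υ ρ r) '' {r | r ≤ N}) →
      ∫ t in (0:ℝ)..1, backWeightTilde μ υ ρ t * (deriv φ t) ^ 2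
        ≤ (N : ℝ) * ((N : ℝ) + μ + υ + 1) *
            ∫ t in (0:ℝ)..1, backWeight μ υ ρ t * φ t ^ 2 := by
  intro φ hφ
  obtain ⟨P, hP, rfl⟩ := span_backJacobi_le_map_backPoly μ υ N hφ
  rw [integral_backWeightTilde_mul_deriv_backPoly_sq hμ hυ hρ0 hρ1,
    integral_backWeight_mul_backPoly_sq hμ hυ hρ0 hρ1]
  exact backForm_jacobiOp_le hμ hυ hρ0 hρ1 hP
end

section
/- Let 0 < θ < 1 and 0 < ν < 1-θ. Let K : [0,1]×[0,1] → ℝ be continuous with |K(t,ϱ)| ≤ M for all t, ϱ, and assume K is uniformly Hölder continuous of exponent ν in its first variable: |K(t,ϱ) - K(s,ϱ)| ≤ L |t-s|^ν for all t, s, ϱ ∈ [0,1]. Then there exists a constant c > 0, depending only on θ, ν, M, L, such that for every continuous f : [0,1] → ℝ: (i) |(𝒦_R f)(t) - (𝒦_R f)(s)| ≤ c |t-s|^ν · sup_{[0,1]} |f| for all t ≠ s in [0,1], and (ii) sup_{t ∈ [0,1]} |(𝒦_R f)(t)| ≤ c · sup_{[0,1]} |f|. Consequently 𝒦_R maps C([0,1])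 boundedly into the Hölder space C^{0,ν}([0,1]). -/
/-! For `s < t`, the difference `KR f t - KR f s` splits into three integrals: the weight
`(ϱ - t)^(-θ) - (ϱ - s)^(-θ)` against `K t · f` over `[t, 1]`, the weight `(ϱ - s)^(-θ)`
against `(K t - K s) · f` over `[t, 1]`, and `(ϱ - s)^(-θ)` against `K s · f` over `[s, t]`.
All weights are nonnegative (the first because `θ > 0`) with explicit integrals; that of the
first telescopes to `(1 - t)^(1-θ) - (1 - s)^(1-θ) + (t - s)^(1-θ) ≤ (t - s)^(1-θ)`. Hence
the first and third terms are `O((t - s)^(1-θ)) ≤ O((t - s)^ν)`, as `t - s ≤ 1` and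
`ν ≤ 1 - θ`, and the second is `O((t - s)^ν)` by the Hölder continuity of `K` in its first
variable. -/

open Real MeasureTheory

/-- The weakly singular adjoint Volterra integral operator
(𝒦_R f)(t) = ∫_t^1 (ϱ-t)^{-θ} K(t,ϱ) f(ϱ) dϱ. -/
noncomputable def KR (θ : ℝ) (K : ℝ → ℝ → ℝ) (f : ℝ → ℝ) (t : ℝ) : ℝ :=
  ∫ ϱ in t..1, (ϱ - t) ^ (-θ) * K t ϱ * f ϱ

open Set

section SingularKernel

variable {θ : ℝ}

lemma intervalIntegrable_sub_rpow_neg (hθ : θ < 1) (s a b : ℝ) :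
    IntervalIntegrable (fun ϱ => (ϱ - s) ^ (-θ)) volume a b := by
  simpa using (intervalIntegral.intervalIntegrable_rpow' (a := a - s) (b := b - s)
    (by linarith : -1 < -θ)).comp_sub_right s

lemma integral_sub_rpow_neg (hθ : θ < 1) (s a b : ℝ) :
    ∫ ϱ in a..b, (ϱ - s) ^ (-θ) = ((b - s) ^ (1 - θ) - (a - s) ^ (1 - θ)) / (1 - θ) := by
  rw [intervalIntegral.integral_comp_sub_right (fun x => x ^ (-θ)) s,
    integral_rpow (Or.inl (by linarith)), neg_add_eq_sub]

lemma integral_sub_rpow_neg_self (hθ : θ < 1) (s b : ℝ) :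
    ∫ ϱ in s..b, (ϱ - s) ^ (-θ) = (b - s) ^ (1 - θ) / (1 - θ) := by
  rw [integral_sub_rpow_neg hθ, sub_self, zero_rpow (by linarith), sub_zero]

end SingularKernel

lemma abs_integral_mul_le_of_abs_le {w g : ℝ → ℝ} {a b C : ℝ} (hab : a ≤ b)
    (hw : IntervalIntegrable w volume a b) (hw0 : ∀ x ∈ Ioc a b, 0 ≤ w x)
    (hg : ∀ x ∈ Ioc a b, |g x| ≤ C) :
    |∫ x in a..b, w x * g x| ≤ C * ∫ x in a..b, w x := by
  rw [← intervalIntegral.integral_const_mul C w, ← Real.norm_eq_abs]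
  refine intervalIntegral.norm_integral_le_of_norm_le hab (ae_of_all _ fun x hx => ?_)
    (hw.const_mul C)
  rw [Real.norm_eq_abs, abs_mul, abs_of_nonneg (hw0 x hx), mul_comm C]
  exact mul_le_mul_of_nonneg_left (hg x hx) (hw0 x hx)

lemma abs_le_sSup_image_abs {f : ℝ → ℝ} {a b x : ℝ} (hf : ContinuousOn f (Icc a b))
    (hx : x ∈ Icc a b) : |f x| ≤ sSup ((fun x => |f x|) '' Icc a b) :=
  le_csSup (isCompact_Icc.image_of_continuousOn hf.abs).bddAbove ⟨x, hx, rfl⟩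

section Operator

variable {θ : ℝ} {K : ℝ → ℝ → ℝ} {f : ℝ → ℝ}

lemma KR_eq_integral_mul (t : ℝ) :
    KR θ K f t = ∫ ϱ in t..1, (ϱ - t) ^ (-θ) * (K t ϱ * f ϱ) := by
  simp only [KR, mul_assoc]

lemma KR_sub_KR_eq (hθ : θ < 1)
    (hK : ContinuousOn (fun p : ℝ × ℝ => K p.1 p.2) (Icc 0 1 ×ˢ Icc 0 1))
    (hf : ContinuousOn f (Icc 0 1)) {s t : ℝ} (hs : 0 ≤ s) (hst : s ≤ t) (ht : t ≤ 1) :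
    KR θ K f t - KR θ K f s =
      (∫ ϱ in t..1, ((ϱ - t) ^ (-θ) - (ϱ - s) ^ (-θ)) * (K t ϱ * f ϱ))
        + (∫ ϱ in t..1, (ϱ - s) ^ (-θ) * ((K t ϱ - K s ϱ) * f ϱ))
        - ∫ ϱ in s..t, (ϱ - s) ^ (-θ) * (K s ϱ * f ϱ) := by
  have hKt : ContinuousOn (K t) (Icc 0 1) :=
    hK.uncurry_left (f := K) t (⟨hs.trans hst, ht⟩ : t ∈ Icc (0 : ℝ) 1)
  have hKs : ContinuousOn (K s) (Icc 0 1) :=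
    hK.uncurry_left (f := K) s (⟨hs, hst.trans ht⟩ : s ∈ Icc (0 : ℝ) 1)
  have h_t1 : uIcc t 1 ⊆ Icc 0 1 := by
    rw [uIcc_of_le ht]; exact Icc_subset_Icc (hs.trans hst) le_rfl
  have h_st : uIcc s t ⊆ Icc 0 1 := by
    rw [uIcc_of_le hst]; exact Icc_subset_Icc hs ht
  have integrable {w g : ℝ → ℝ} {a b : ℝ} (hw : IntervalIntegrable w volume a b)
      (hg : ContinuousOn g (Icc 0 1)) (hab : uIcc a b ⊆ Icc 0 1) :
      IntervalIntegrable (fun ϱ => w ϱ * (g ϱ * f ϱ)) volume a b :=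
    hw.mul_continuousOn ((hg.mul hf).mono hab)
  have split := intervalIntegral.integral_add_adjacent_intervals
    (integrable (intervalIntegrable_sub_rpow_neg hθ s s t) hKs h_st)
    (integrable (intervalIntegrable_sub_rpow_neg hθ s t 1) hKs h_t1)
  have combine : (∫ ϱ in t..1, (ϱ - t) ^ (-θ) * (K t ϱ * f ϱ))
      - (∫ ϱ in t..1, (ϱ - s) ^ (-θ) * (K s ϱ * f ϱ))
      = (∫ ϱ in t..1, ((ϱ - t) ^ (-θ) - (ϱ - s) ^ (-θ)) * (K t ϱ * f ϱ))
        + ∫ ϱ in t..1, (ϱ - s) ^ (-θ) * ((K t ϱ - K s ϱ) * f ϱ) := by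
    rw [← intervalIntegral.integral_sub
        (integrable (intervalIntegrable_sub_rpow_neg hθ t t 1) hKt h_t1)
        (integrable (intervalIntegrable_sub_rpow_neg hθ s t 1) hKs h_t1),
      ← intervalIntegral.integral_add
        (integrable ((intervalIntegrable_sub_rpow_neg hθ t t 1).sub
          (intervalIntegrable_sub_rpow_neg hθ s t 1)) hKt h_t1)
        (integrable (g := fun ϱ => K t ϱ - K s ϱ) (intervalIntegrable_sub_rpow_neg hθ s t 1)
          (hKt.sub hKs) h_t1)]
    congr 1 with ϱ
    ring
  rw [KR_eq_integral_mul, KR_eq_integral_mul, ← split]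
  linarith

lemma abs_KR_le (hθ : θ < 1) {M S : ℝ} (hM : 0 ≤ M)
    (hKM : ∀ t ∈ Icc (0 : ℝ) 1, ∀ ϱ ∈ Icc (0 : ℝ) 1, |K t ϱ| ≤ M)
    (hfS : ∀ x ∈ Icc (0 : ℝ) 1, |f x| ≤ S) {t : ℝ} (ht : t ∈ Icc (0 : ℝ) 1) :
    |KR θ K f t| ≤ M / (1 - θ) * S := by
  have h1θ : 0 < 1 - θ := by linarith
  have hMS : 0 ≤ M * S := mul_nonneg hM ((abs_nonneg _).trans (hfS t ht))
  have hKf : ∀ ϱ ∈ Ioc t 1, |K t ϱ * f ϱ| ≤ M * S := fun ϱ hϱ => by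
    have hϱ : ϱ ∈ Icc (0 : ℝ) 1 := ⟨ht.1.trans hϱ.1.le, hϱ.2⟩
    rw [abs_mul]
    exact mul_le_mul (hKM t ht ϱ hϱ) (hfS ϱ hϱ) (abs_nonneg _) hM
  rw [KR_eq_integral_mul]
  calc _ ≤ M * S * ∫ ϱ in t..1, (ϱ - t) ^ (-θ) :=
        abs_integral_mul_le_of_abs_le ht.2 (intervalIntegrable_sub_rpow_neg hθ t t 1)
          (fun ϱ hϱ => rpow_nonneg (sub_nonneg.2 hϱ.1.le) _) hKf
    _ = M * S * ((1 - t) ^ (1 - θ) / (1 - θ)) := by rw [integral_sub_rpow_neg_self hθ]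
    _ ≤ M * S * (1 / (1 - θ)) := by
        gcongr
        exact rpow_le_one (sub_nonneg.2 ht.2) (by linarith [ht.1]) h1θ.le
    _ = M / (1 - θ) * S := by ring

lemma abs_KR_sub_le_of_lt (hθ0 : 0 < θ) (hθ1 : θ < 1) {ν M L S : ℝ} (hν : ν ≤ 1 - θ)
    (hM : 0 ≤ M) (hL : 0 ≤ L)
    (hK : ContinuousOn (fun p : ℝ × ℝ => K p.1 p.2) (Icc 0 1 ×ˢ Icc 0 1))
    (hKM : ∀ t ∈ Icc (0 : ℝ) 1, ∀ ϱ ∈ Icc (0 : ℝ) 1, |K t ϱ| ≤ M)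
    (hKL : ∀ t ∈ Icc (0 : ℝ) 1, ∀ s ∈ Icc (0 : ℝ) 1, ∀ ϱ ∈ Icc (0 : ℝ) 1,
      |K t ϱ - K s ϱ| ≤ L * |t - s| ^ ν)
    (hf : ContinuousOn f (Icc 0 1)) (hfS : ∀ x ∈ Icc (0 : ℝ) 1, |f x| ≤ S)
    {s t : ℝ} (hs : s ∈ Icc (0 : ℝ) 1) (ht : t ∈ Icc (0 : ℝ) 1) (hst : s < t) :
    |KR θ K f t - KR θ K f s| ≤ (2 * M + L) / (1 - θ) * (t - s) ^ ν * S := by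
  have h1θ : 0 < 1 - θ := by linarith
  have hS : 0 ≤ S := (abs_nonneg _).trans (hfS s hs)
  have hd : 0 < t - s := sub_pos.2 hst
  have hpow : (t - s) ^ (1 - θ) ≤ (t - s) ^ ν :=
    rpow_le_rpow_of_exponent_ge hd (by linarith [hs.1, ht.2]) hν
  have hKf : ∀ r ∈ Icc (0 : ℝ) 1, ∀ ϱ ∈ Icc (0 : ℝ) 1, |K r ϱ * f ϱ| ≤ M * S :=
    fun r hr ϱ hϱ => by
      rw [abs_mul]
      exact mul_le_mul (hKM r hr ϱ hϱ) (hfS ϱ hϱ) (abs_nonneg _) hM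
  have mem_t1 : ∀ ϱ ∈ Ioc t 1, ϱ ∈ Icc (0 : ℝ) 1 := fun ϱ hϱ => ⟨ht.1.trans hϱ.1.le, hϱ.2⟩
  have mem_st : ∀ ϱ ∈ Ioc s t, ϱ ∈ Icc (0 : ℝ) 1 :=
    fun ϱ hϱ => ⟨hs.1.trans hϱ.1.le, hϱ.2.trans ht.2⟩
  have int_t := intervalIntegrable_sub_rpow_neg hθ1 t t 1
  have int_s := intervalIntegrable_sub_rpow_neg hθ1 s t 1
  have bound₁ : |∫ ϱ in t..1, ((ϱ - t) ^ (-θ) - (ϱ - s) ^ (-θ)) * (K t ϱ * f ϱ)|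
      ≤ M * S * ((t - s) ^ (1 - θ) / (1 - θ)) := by
    have h1 : (1 - t) ^ (1 - θ) ≤ (1 - s) ^ (1 - θ) :=
      rpow_le_rpow (sub_nonneg.2 ht.2) (by linarith) h1θ.le
    calc _ ≤ M * S * ∫ ϱ in t..1, ((ϱ - t) ^ (-θ) - (ϱ - s) ^ (-θ)) :=
          abs_integral_mul_le_of_abs_le ht.2 (int_t.sub int_s)
            (fun ϱ hϱ => sub_nonneg.2 <|
              rpow_le_rpow_of_nonpos (sub_pos.2 hϱ.1) (by linarith) (by linarith))
            (fun ϱ hϱ => hKf t ht ϱ (mem_t1 ϱ hϱ))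
      _ = M * S * (((1 - t) ^ (1 - θ) - (1 - s) ^ (1 - θ) + (t - s) ^ (1 - θ)) / (1 - θ)) := by
          rw [intervalIntegral.integral_sub int_t int_s, integral_sub_rpow_neg_self hθ1,
            integral_sub_rpow_neg hθ1]
          ring
      _ ≤ M * S * ((t - s) ^ (1 - θ) / (1 - θ)) := by gcongr; linarith
  have bound₂ : |∫ ϱ in t..1, (ϱ - s) ^ (-θ) * ((K t ϱ - K s ϱ) * f ϱ)|
      ≤ L * (t - s) ^ ν * S * (1 / (1 - θ)) := by
    have h1 : (1 - s) ^ (1 - θ) ≤ 1 :=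
      rpow_le_one (sub_nonneg.2 hs.2) (by linarith [hs.1]) h1θ.le
    calc _ ≤ L * (t - s) ^ ν * S * ∫ ϱ in t..1, (ϱ - s) ^ (-θ) := by
          refine abs_integral_mul_le_of_abs_le ht.2 int_s
            (fun ϱ hϱ => rpow_nonneg (by linarith [hϱ.1]) _) (fun ϱ hϱ => ?_)
          have hKd := hKL t ht s hs ϱ (mem_t1 ϱ hϱ)
          rw [abs_of_pos hd] at hKd
          rw [abs_mul]
          exact mul_le_mul hKd (hfS ϱ (mem_t1 ϱ hϱ)) (abs_nonneg _) (by positivity)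
      _ = L * (t - s) ^ ν * S * (((1 - s) ^ (1 - θ) - (t - s) ^ (1 - θ)) / (1 - θ)) := by
          rw [integral_sub_rpow_neg hθ1]
      _ ≤ L * (t - s) ^ ν * S * (1 / (1 - θ)) := by
          gcongr
          linarith [rpow_nonneg hd.le (1 - θ)]
  have bound₃ : |∫ ϱ in s..t, (ϱ - s) ^ (-θ) * (K s ϱ * f ϱ)|
      ≤ M * S * ((t - s) ^ (1 - θ) / (1 - θ)) := by
    rw [← integral_sub_rpow_neg_self hθ1]
    exact abs_integral_mul_le_of_abs_le hst.le (intervalIntegrable_sub_rpow_neg hθ1 s s t)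
      (fun ϱ hϱ => rpow_nonneg (sub_nonneg.2 hϱ.1.le) _)
      (fun ϱ hϱ => hKf s hs ϱ (mem_st ϱ hϱ))
  have weaken : M * S * ((t - s) ^ (1 - θ) / (1 - θ)) ≤ M * S * ((t - s) ^ ν / (1 - θ)) := by
    gcongr
  rw [KR_sub_KR_eq hθ1 hK hf hs.1 hst.le ht.2]
  refine (abs_sub _ _).trans ((add_le_add_left (abs_add_le _ _) _).trans ?_)
  calc _ ≤ 2 * (M * S * ((t - s) ^ ν / (1 - θ))) + L * (t - s) ^ ν * S * (1 / (1 - θ)) := by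
        linarith
    _ = (2 * M + L) / (1 - θ) * (t - s) ^ ν * S := by ring

lemma abs_KR_sub_le (hθ0 : 0 < θ) (hθ1 : θ < 1) {ν M L S : ℝ} (hν : ν ≤ 1 - θ)
    (hM : 0 ≤ M) (hL : 0 ≤ L)
    (hK : ContinuousOn (fun p : ℝ × ℝ => K p.1 p.2) (Icc 0 1 ×ˢ Icc 0 1))
    (hKM : ∀ t ∈ Icc (0 : ℝ) 1, ∀ ϱ ∈ Icc (0 : ℝ) 1, |K t ϱ| ≤ M)
    (hKL : ∀ t ∈ Icc (0 : ℝ) 1, ∀ s ∈ Icc (0 : ℝ) 1, ∀ ϱ ∈ Icc (0 : ℝ) 1,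
      |K t ϱ - K s ϱ| ≤ L * |t - s| ^ ν)
    (hf : ContinuousOn f (Icc 0 1)) (hfS : ∀ x ∈ Icc (0 : ℝ) 1, |f x| ≤ S)
    {s t : ℝ} (hs : s ∈ Icc (0 : ℝ) 1) (ht : t ∈ Icc (0 : ℝ) 1) (hst : t ≠ s) :
    |KR θ K f t - KR θ K f s| ≤ (2 * M + L) / (1 - θ) * |t - s| ^ ν * S := by
  rcases hst.lt_or_gt with h | h
  · rw [abs_sub_comm, abs_sub_comm t, abs_of_pos (sub_pos.2 h)]
    exact abs_KR_sub_le_of_lt hθ0 hθ1 hν hM hL hK hKM hKL hf hfS ht hs h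
  · rw [abs_of_pos (sub_pos.2 h)]
    exact abs_KR_sub_le_of_lt hθ0 hθ1 hν hM hL hK hKM hKL hf hfS hs ht h

end Operator

theorem KR_holder_bound_general
    (θ ν M L : ℝ) (hθ0 : 0 < θ) (hθ1 : θ < 1) (hν1 : ν < 1 - θ)
    (hM : 0 ≤ M) (hL : 0 ≤ L) :
    ∃ c > 0, ∀ K : ℝ → ℝ → ℝ,
      ContinuousOn (fun p : ℝ × ℝ => K p.1 p.2) (Set.Icc 0 1 ×ˢ Set.Icc 0 1) →
      (∀ t ∈ Set.Icc (0:ℝ) 1, ∀ ϱ ∈ Set.Icc (0:ℝ) 1, |K t ϱ| ≤ M) →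
      (∀ t ∈ Set.Icc (0:ℝ) 1, ∀ s ∈ Set.Icc (0:ℝ) 1, ∀ ϱ ∈ Set.Icc (0:ℝ) 1,
        |K t ϱ - K s ϱ| ≤ L * |t - s| ^ ν) →
      ∀ f : ℝ → ℝ, ContinuousOn f (Set.Icc 0 1) →
        (∀ t ∈ Set.Icc (0:ℝ) 1, ∀ s ∈ Set.Icc (0:ℝ) 1, t ≠ s →
          |KR θ K f t - KR θ K f s|
            ≤ c * |t - s| ^ ν * sSup ((fun x => |f x|) '' Set.Icc 0 1)) ∧
        (∀ t ∈ Set.Icc (0:ℝ) 1,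
          |KR θ K f t| ≤ c * sSup ((fun x => |f x|) '' Set.Icc 0 1)) := by
  have h1θ : 0 < 1 - θ := by linarith
  refine ⟨(2 * M + L + 1) / (1 - θ), by positivity, fun K hK hKM hKL f hf => ?_⟩
  set S := sSup ((fun x => |f x|) '' Icc 0 1)
  have hfS : ∀ x ∈ Icc (0 : ℝ) 1, |f x| ≤ S := fun x hx => abs_le_sSup_image_abs hf hx
  have hS : 0 ≤ S := (abs_nonneg _).trans (hfS 0 (left_mem_Icc.2 zero_le_one))
  have holder_const : (2 * M + L) / (1 - θ) ≤ (2 * M + L + 1) / (1 - θ) := by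
    gcongr ?_ / _; linarith
  refine ⟨fun t ht s hs hts => ?_, fun t ht => ?_⟩
  · calc _ ≤ (2 * M + L) / (1 - θ) * |t - s| ^ ν * S :=
          abs_KR_sub_le hθ0 hθ1 hν1.le hM hL hK hKM hKL hf hfS hs ht hts
      _ ≤ _ := by gcongr
  · calc _ ≤ M / (1 - θ) * S := abs_KR_le hθ1 hM hKM hfS ht
      _ ≤ _ := by gcongr ?_ / _ * _; linarith

/-- Hölder regularity of the weakly singular adjoint Volterra operator: 𝒦_R maps
C([0,1]) boundedly into C^{0,ν}([0,1]) for 0 < ν < 1-θ, with a constant depending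
only on θ, ν, M, L. -/
theorem KR_holder_bound
    (θ ν M L : ℝ) (hθ0 : 0 < θ) (hθ1 : θ < 1) (hν0 : 0 < ν) (hν1 : ν < 1 - θ)
    (hM : 0 ≤ M) (hL : 0 ≤ L) :
    ∃ c > 0, ∀ K : ℝ → ℝ → ℝ,
      ContinuousOn (fun p : ℝ × ℝ => K p.1 p.2) (Set.Icc 0 1 ×ˢ Set.Icc 0 1) →
      (∀ t ∈ Set.Icc (0:ℝ) 1, ∀ ϱ ∈ Set.Icc (0:ℝ) 1, |K t ϱ| ≤ M) →
      (∀ t ∈ Set.Icc (0:ℝ) 1, ∀ s ∈ Set.Icc (0:ℝ) 1, ∀ ϱ ∈ Set.Icc (0:ℝ) 1,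
        |K t ϱ - K s ϱ| ≤ L * |t - s| ^ ν) →
      ∀ f : ℝ → ℝ, ContinuousOn f (Set.Icc 0 1) →
        (∀ t ∈ Set.Icc (0:ℝ) 1, ∀ s ∈ Set.Icc (0:ℝ) 1, t ≠ s →
          |KR θ K f t - KR θ K f s|
            ≤ c * |t - s| ^ ν * sSup ((fun x => |f x|) '' Set.Icc 0 1)) ∧
        (∀ t ∈ Set.Icc (0:ℝ) 1,
          |KR θ K f t| ≤ c * sSup ((fun x => |f x|) '' Set.Icc 0 1)) :=
  KR_holder_bound_general θ ν M L hθ0 hθ1 hν1 hM hL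
end
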